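/- arXiv:1704.07501 — 13 statements merged into one kernel-verified Lean document; each statement's English description precedes it below -/
import Mathlib

section
/- For every 1 ≤ j ≤ n, the j×j tridiagonal matrix A_j whose diagonal entries are −a_{11},…,−a_{jj}, whose superdiagonal entries are −a_{12},…,−a_{j−1,j}, and whose subdiagonal entries are a_{21},…,a_{j,j−1} is invertible, and moreover (−1)^j det(A_j) > 0. Consequently the linear system (S_j) has a unique solution (x_1^{(j)},…,x_j^{(j)}). -/
/-!
Expanding `det A_{j+2}` along its last row gives the continuant recurrence
`D_{j+2} = -a_{j+2,j+2} D_{j+1} + a_{j+2,j+1} a_{j+1,j+2} D_j`, so `(-1)^j D_j` satisfies a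
recurrence with positive coefficients and is positive by induction. Hence every `A_j` is
invertible, and `(S_j)` is the system `A_j x = b` in disguise.
-/

/-- The `j × j` tridiagonal matrix `A_j` of the system `(S_j)`:
diagonal entries `−a_{11}, …, −a_{jj}`, superdiagonal entries `−a_{12}, …, −a_{j−1,j}`,
subdiagonal entries `a_{21}, …, a_{j,j−1}`.  (Math indices `1, …, j` correspond to
`Fin j` indices `0, …, j−1`.) -/
def Atri (a : ℕ → ℕ → ℝ) (j : ℕ) : Matrix (Fin j) (Fin j) ℝ :=
  Matrix.of fun i k =>
    if (i : ℕ) = (k : ℕ) then -a ((i : ℕ) + 1) ((i : ℕ) + 1)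
    else if (k : ℕ) = (i : ℕ) + 1 then -a ((i : ℕ) + 1) ((i : ℕ) + 2)
    else if (i : ℕ) = (k : ℕ) + 1 then a ((i : ℕ) + 1) ((k : ℕ) + 1)
    else 0

/-- `x` solves the linear system `(S_j)`:
`−a_{11}x_1 − a_{12}x_2 = −ã_{10}`;
`a_{i,i−1}x_{i−1} − a_{ii}x_i − a_{i,i+1}x_{i+1} = ã_{i0}` for `2 ≤ i ≤ j−1`;
`a_{j,j−1}x_{j−1} − a_{jj}x_j = ã_{j0}`
(for `j = 1` the single equation reads `−a_{11}x_1 = −ã_{10}`). -/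
def IsSolS (a : ℕ → ℕ → ℝ) (ta : ℕ → ℝ) (j : ℕ) (x : ℕ → ℝ) : Prop :=
  ∀ i, 1 ≤ i → i ≤ j →
    (if 2 ≤ i then a i (i - 1) * x (i - 1) else 0)
      - a i i * x i
      - (if i < j then a i (i + 1) * x (i + 1) else 0)
    = if i = 1 then -ta 1 else ta i

open Matrix

theorem Matrix.det_succ_succ_of_last_row_col_eq_zero {R : Type*} [CommRing R] {m : ℕ}
    (M : Matrix (Fin (m + 2)) (Fin (m + 2)) R)
    (hrow : ∀ k : Fin m, M (Fin.last _) k.castSucc.castSucc = 0)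
    (hcol : ∀ k : Fin m, M k.castSucc.castSucc (Fin.last _) = 0) :
    M.det = M (Fin.last _) (Fin.last _) * (M.submatrix Fin.castSucc Fin.castSucc).det
      - M (Fin.last _) (Fin.last m).castSucc * M (Fin.last m).castSucc (Fin.last _)
        * ((M.submatrix Fin.castSucc Fin.castSucc).submatrix Fin.castSucc Fin.castSucc).det := by
  have hcols : (Fin.last m).castSucc.succAbove ∘ Fin.castSucc = Fin.castSucc ∘ Fin.castSucc := by
    funext k
    exact Fin.succAbove_of_castSucc_lt _ _ (by simp)
  have hminor : (M.submatrix (Fin.last _).succAbove (Fin.last m).castSucc.succAbove).det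
      = M (Fin.last m).castSucc (Fin.last _)
        * ((M.submatrix Fin.castSucc Fin.castSucc).submatrix Fin.castSucc Fin.castSucc).det := by
    rw [det_succ_column _ (Fin.last m), Fin.sum_univ_castSucc,
      Finset.sum_eq_zero (fun k _ => by simp [Fin.succAbove_last, hcol])]
    simp [Fin.succAbove_last, submatrix_submatrix, hcols]
  rw [det_succ_row M (Fin.last _), Fin.sum_univ_castSucc, Fin.sum_univ_castSucc,
    Finset.sum_eq_zero (fun k _ => by simp [hrow]), hminor]
  simp only [Fin.val_last, Fin.val_castSucc, odd_add_one_self, Odd.neg_one_pow, Even.add_self,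
    Even.neg_pow, one_pow, neg_mul, one_mul, submatrix_submatrix, Fin.succAbove_last]
  ring

section Tridiagonal

variable (a : ℕ → ℕ → ℝ)

theorem Atri_submatrix_castSucc (j : ℕ) :
    (Atri a (j + 1)).submatrix Fin.castSucc Fin.castSucc = Atri a j := by
  ext i k
  simp [Atri]

theorem det_Atri_add_two (j : ℕ) :
    (Atri a (j + 2)).det = -a (j + 2) (j + 2) * (Atri a (j + 1)).det
      + a (j + 2) (j + 1) * a (j + 1) (j + 2) * (Atri a j).det := by
  have hLL : Atri a (j + 2) (Fin.last _) (Fin.last _) = -a (j + 2) (j + 2) := by simp [Atri]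
  have hLc : Atri a (j + 2) (Fin.last _) (Fin.last j).castSucc = a (j + 2) (j + 1) := by
    simp (disch := omega) [Atri, if_neg]
  have hcL : Atri a (j + 2) (Fin.last j).castSucc (Fin.last _) = -a (j + 1) (j + 2) := by
    simp (disch := omega) [Atri]
  rw [det_succ_succ_of_last_row_col_eq_zero _
      (fun k => by have := k.isLt; simp (disch := omega) [Atri, if_neg])
      (fun k => by have := k.isLt; simp (disch := omega) [Atri, if_neg]),
    Atri_submatrix_castSucc, Atri_submatrix_castSucc, hLL, hLc, hcL]
  ring

theorem neg_one_pow_mul_det_Atri_pos {n : ℕ}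
    (ha_diag : ∀ i, 1 ≤ i → i ≤ n → 0 < a i i)
    (ha_sub : ∀ i, 2 ≤ i → i ≤ n → 0 < a i (i - 1))
    (ha_sup : ∀ i, 1 ≤ i → i ≤ n - 1 → 0 < a i (i + 1)) :
    ∀ j ≤ n, 0 < (-1 : ℝ) ^ j * (Atri a j).det := by
  intro j
  induction j using Nat.twoStepInduction with
  | zero => simp
  | one =>
    intro h1
    simpa [det_fin_one, Atri] using ha_diag 1 le_rfl h1
  | more m ih₀ ih₁ =>
    intro hm
    have hdiag : 0 < a (m + 2) (m + 2) := ha_diag _ (by omega) hm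
    have hsub : 0 < a (m + 2) (m + 1) := ha_sub (m + 2) (by omega) hm
    have hsup : 0 < a (m + 1) (m + 2) := ha_sup (m + 1) (by omega) (by omega)
    have hrec : (-1 : ℝ) ^ (m + 2) * (Atri a (m + 2)).det
        = a (m + 2) (m + 2) * ((-1 : ℝ) ^ (m + 1) * (Atri a (m + 1)).det)
          + a (m + 2) (m + 1) * a (m + 1) (m + 2) * ((-1 : ℝ) ^ m * (Atri a m).det) := by
      rw [det_Atri_add_two, pow_succ, pow_succ]
      ring
    rw [hrec]
    exact add_pos (mul_pos hdiag (ih₁ (by omega))) (mul_pos (mul_pos hsub hsup) (ih₀ (by omega)))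

-- Stated in the shape of the `(i + 1)`-st equation of `IsSolS`.
theorem Atri_mulVec_apply (j : ℕ) (x : ℕ → ℝ) (i : Fin j) :
    (Atri a j *ᵥ fun k : Fin j => x ((k : ℕ) + 1)) i
      = (if 2 ≤ (i : ℕ) + 1 then a ((i : ℕ) + 1) ((i : ℕ) + 1 - 1) * x ((i : ℕ) + 1 - 1) else 0)
        - a ((i : ℕ) + 1) ((i : ℕ) + 1) * x ((i : ℕ) + 1)
        - (if (i : ℕ) + 1 < j then a ((i : ℕ) + 1) ((i : ℕ) + 1 + 1) * x ((i : ℕ) + 1 + 1)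
            else 0) := by
  obtain ⟨m, hm⟩ := i
  simp only [mulVec, dotProduct, Atri, of_apply]
  rw [Fin.sum_univ_eq_sum_range (fun k => (if m = k then -a (m + 1) (m + 1)
    else if k = m + 1 then -a (m + 1) (m + 2)
    else if m = k + 1 then a (m + 1) (k + 1) else 0) * x (k + 1))]
  have hsplit : ∀ k, (if m = k then -a (m + 1) (m + 1)
      else if k = m + 1 then -a (m + 1) (m + 2)
      else if m = k + 1 then a (m + 1) (k + 1) else 0) * x (k + 1)
      = (if m = k + 1 then a (m + 1) m * x m else 0)
        - (if k = m then a (m + 1) (m + 1) * x (m + 1) else 0)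
        - (if k = m + 1 then a (m + 1) (m + 2) * x (m + 2) else 0) := by
    intro k
    split_ifs <;> subst_vars <;> first | ring1 | omega
  simp only [hsplit, Finset.sum_sub_distrib, Finset.sum_ite_eq', Finset.mem_range, if_pos hm]
  rcases m with _ | p
  · simp
  · simp [show p < j by omega]

theorem isSolS_iff_mulVec_eq (ta : ℕ → ℝ) (j : ℕ) (x : ℕ → ℝ) :
    IsSolS a ta j x ↔
      (Atri a j *ᵥ fun k : Fin j => x ((k : ℕ) + 1))
        = fun i : Fin j => if (i : ℕ) = 0 then -ta 1 else ta ((i : ℕ) + 1) := by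
  constructor
  · intro h
    funext i
    rw [Atri_mulVec_apply, h ((i : ℕ) + 1) (by omega) i.isLt]
    simp
  · intro h i h1 h2
    obtain ⟨m, rfl⟩ : ∃ m, i = m + 1 := ⟨i - 1, by omega⟩
    have hrow := congrFun h ⟨m, by omega⟩
    rw [Atri_mulVec_apply] at hrow
    simpa using hrow

end Tridiagonal

theorem stmt0_general (n : ℕ) (a : ℕ → ℕ → ℝ) (ta : ℕ → ℝ)
    (ha_diag : ∀ i, 1 ≤ i → i ≤ n → 0 < a i i)
    (ha_sub : ∀ i, 2 ≤ i → i ≤ n → 0 < a i (i - 1))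
    (ha_sup : ∀ i, 1 ≤ i → i ≤ n - 1 → 0 < a i (i + 1)) :
    ∀ j, 1 ≤ j → j ≤ n →
      IsUnit (Atri a j) ∧
      0 < (-1 : ℝ) ^ j * (Atri a j).det ∧
      ∃ x : ℕ → ℝ, IsSolS a ta j x ∧
        ∀ y : ℕ → ℝ, IsSolS a ta j y → ∀ i, 1 ≤ i → i ≤ j → y i = x i := by
  intro j _ hjn
  have hpos := neg_one_pow_mul_det_Atri_pos a ha_diag ha_sub ha_sup j hjn
  have hunit : IsUnit (Atri a j) :=
    (isUnit_iff_isUnit_det _).2 (isUnit_iff_ne_zero.2 (right_ne_zero_of_mul hpos.ne'))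
  obtain ⟨v, hv⟩ := mulVec_surjective_iff_isUnit.2 hunit
    fun i : Fin j => if (i : ℕ) = 0 then -ta 1 else ta ((i : ℕ) + 1)
  set x : ℕ → ℝ := fun k => if h : k - 1 < j then v ⟨k - 1, h⟩ else 0
  have hxv : (fun k : Fin j => x ((k : ℕ) + 1)) = v := by
    funext k
    simp [x]
  refine ⟨hunit, hpos, x, (isSolS_iff_mulVec_eq a ta j x).2 (hxv ▸ hv), fun y hy i h1 h2 => ?_⟩
  have hyx : (fun k : Fin j => y ((k : ℕ) + 1)) = fun k : Fin j => x ((k : ℕ) + 1) :=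
    mulVec_injective_iff_isUnit.2 hunit <| by
      rw [(isSolS_iff_mulVec_eq a ta j y).1 hy, hxv, hv]
  simpa [Nat.sub_add_cancel h1] using congrFun hyx ⟨i - 1, by omega⟩

/-- For every `1 ≤ j ≤ n`, the tridiagonal matrix `A_j` is invertible with
`(−1)^j det(A_j) > 0`; consequently the system `(S_j)` has a unique solution. -/
theorem stmt0 (n : ℕ) (hn : 1 ≤ n) (a : ℕ → ℕ → ℝ) (ta : ℕ → ℝ)
    (ha_diag : ∀ i, 1 ≤ i → i ≤ n → 0 < a i i)
    (ha_sub : ∀ i, 2 ≤ i → i ≤ n → 0 < a i (i - 1))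
    (ha_sup : ∀ i, 1 ≤ i → i ≤ n - 1 → 0 < a i (i + 1))
    (hta : ∀ i, 2 ≤ i → i ≤ n → 0 < ta i) :
    ∀ j, 1 ≤ j → j ≤ n →
      IsUnit (Atri a j) ∧
      0 < (-1 : ℝ) ^ j * (Atri a j).det ∧
      ∃ x : ℕ → ℝ, IsSolS a ta j x ∧
        ∀ y : ℕ → ℝ, IsSolS a ta j y → ∀ i, 1 ≤ i → i ≤ j → y i = x i :=
  stmt0_general n a ta ha_diag ha_sub ha_sup
end

section
/- (Proposition: invasion rates and positive solutions.) For every 1 ≤ j ≤ n−1, the unique solution of the system (S_{j+1}) satisfies x_{j+1}^{(j+1)} = I_{j+1} / (a_{j+1,j+1} + a_{j+1,j} c_j'), where the denominator a_{j+1,j+1} + a_{j+1,j} c_j' is strictly positive. In particular, x_{j+1}^{(j+1)} > 0 if and only if I_{j+1} > 0, x_{j+1}^{(j+1)} = 0 if and only if I_{j+1} = 0, and x_{j+1}^{(j+1)} < 0 if and only if I_{j+1} < 0. -/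
/-- The first `m` rows of the homogeneous system; unlike in `(S_m)`, row `m` keeps its
coupling to the extra unknown `d (m + 1)`. -/
def IsHomSolS (a : ℕ → ℕ → ℝ) (m : ℕ) (d : ℕ → ℝ) : Prop :=
  ∀ i, 1 ≤ i → i ≤ m →
    (if 2 ≤ i then a i (i - 1) * d (i - 1) else 0) - a i i * d i - a i (i + 1) * d (i + 1) = 0

section ForwardSweep

variable {a : ℕ → ℕ → ℝ} {cp : ℕ → ℝ}

theorem IsHomSolS.eq_neg_mul_succ {m : ℕ} {d : ℕ → ℝ} (hd : IsHomSolS a m d)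
    (ha₁ : a 1 1 ≠ 0) (hcp1 : cp 1 = a 1 2 / a 1 1)
    (hpivot : ∀ i, 1 ≤ i → i + 1 ≤ m → a (i + 1) (i + 1) + a (i + 1) i * cp i ≠ 0)
    (hcp : ∀ i, 2 ≤ i → i ≤ m → cp i = a i (i + 1) / (a i i + a i (i - 1) * cp (i - 1))) :
    ∀ i, 1 ≤ i → i ≤ m → d i = -cp i * d (i + 1) := by
  intro i hi
  induction i, hi using Nat.le_induction with
  | base =>
    intro h1m
    have row := hd 1 le_rfl h1m
    rw [if_neg (by omega)] at row
    rw [hcp1]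
    field_simp
    linear_combination -row
  | succ i hi ih =>
    intro him
    have row := hd (i + 1) (by omega) him
    rw [if_pos (by omega), Nat.add_sub_cancel, ih (by omega)] at row
    have hp := hpivot i hi him
    rw [hcp (i + 1) (by omega) him, Nat.add_sub_cancel]
    field_simp
    linear_combination -row

theorem forwardSweep_pos {n : ℕ}
    (ha_diag : ∀ i, 1 ≤ i → i ≤ n → 0 < a i i)
    (ha_sub : ∀ i, 2 ≤ i → i ≤ n → 0 < a i (i - 1))
    (ha_sup : ∀ i, 1 ≤ i → i ≤ n - 1 → 0 < a i (i + 1))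
    (hcp1 : cp 1 = a 1 2 / a 1 1)
    (hcp : ∀ i, 2 ≤ i → i ≤ n - 1 →
      cp i = a i (i + 1) / (a i i + a i (i - 1) * cp (i - 1))) :
    ∀ i, 1 ≤ i → i ≤ n - 1 → 0 < cp i := by
  intro i hi
  induction i, hi using Nat.le_induction with
  | base =>
    intro h
    rw [hcp1]
    exact div_pos (ha_sup 1 le_rfl h) (ha_diag 1 le_rfl (by omega))
  | succ i hi ih =>
    intro h
    have hdiag := ha_diag (i + 1) (by omega) (by omega)
    have hsub := ha_sub (i + 1) (by omega) (by omega)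
    have hcpi := ih (by omega)
    rw [Nat.add_sub_cancel] at hsub
    rw [hcp (i + 1) (by omega) h, Nat.add_sub_cancel]
    exact div_pos (ha_sup (i + 1) (by omega) h) (by positivity)

theorem pivot_pos {n : ℕ}
    (ha_diag : ∀ i, 1 ≤ i → i ≤ n → 0 < a i i)
    (ha_sub : ∀ i, 2 ≤ i → i ≤ n → 0 < a i (i - 1))
    (hcp_pos : ∀ i, 1 ≤ i → i ≤ n - 1 → 0 < cp i) :
    ∀ i, 1 ≤ i → i ≤ n - 1 → 0 < a (i + 1) (i + 1) + a (i + 1) i * cp i := by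
  intro i hi hin
  have hdiag := ha_diag (i + 1) (by omega) (by omega)
  have hsub := ha_sub (i + 1) (by omega) (by omega)
  have hcpi := hcp_pos i hi hin
  rw [Nat.add_sub_cancel] at hsub
  positivity

end ForwardSweep

theorem isHomSolS_sub {a : ℕ → ℕ → ℝ} {ta : ℕ → ℝ} {j : ℕ} {x y : ℕ → ℝ}
    (hx : IsSolS a ta j x) (hy : IsSolS a ta (j + 1) y) :
    IsHomSolS a j (fun i => if i ≤ j then x i - y i else -y i) := by
  intro i hi hij
  have rowx := hx i hi hij
  have rowy := hy i hi (by omega)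
  beta_reduce
  split_ifs at rowx rowy ⊢ <;> first | omega | linear_combination rowx - rowy

theorem sign_iff_of_eq_div {x I d : ℝ} (hd : 0 < d) (hx : x = I / d) :
    (0 < x ↔ 0 < I) ∧ (x = 0 ↔ I = 0) ∧ (x < 0 ↔ I < 0) := by
  subst hx
  exact ⟨div_pos_iff_of_pos_right hd, div_eq_zero_iff.trans (or_iff_left hd.ne'),
    by rw [div_lt_iff₀ hd, zero_mul]⟩

theorem stmt3_general (n : ℕ) (a : ℕ → ℕ → ℝ) (ta : ℕ → ℝ)
    (ha_diag : ∀ i, 1 ≤ i → i ≤ n → 0 < a i i)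
    (ha_sub : ∀ i, 2 ≤ i → i ≤ n → 0 < a i (i - 1))
    (ha_sup : ∀ i, 1 ≤ i → i ≤ n - 1 → 0 < a i (i + 1))
    (cp : ℕ → ℝ)
    (hcp1 : cp 1 = a 1 2 / a 1 1)
    (hcp : ∀ i, 2 ≤ i → i ≤ n - 1 →
      cp i = a i (i + 1) / (a i i + a i (i - 1) * cp (i - 1)))
    (j : ℕ) (hj1 : 1 ≤ j) (hjn : j ≤ n - 1)
    (xj xj1 : ℕ → ℝ)
    (hxj : IsSolS a ta j xj) (hxj1 : IsSolS a ta (j + 1) xj1)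
    (I : ℝ) (hI : I = -ta (j + 1) + a (j + 1) j * xj j) :
    0 < a (j + 1) (j + 1) + a (j + 1) j * cp j ∧
    xj1 (j + 1) = I / (a (j + 1) (j + 1) + a (j + 1) j * cp j) ∧
    (0 < xj1 (j + 1) ↔ 0 < I) ∧
    (xj1 (j + 1) = 0 ↔ I = 0) ∧
    (xj1 (j + 1) < 0 ↔ I < 0) := by
  have hpivot := pivot_pos ha_diag ha_sub (forwardSweep_pos ha_diag ha_sub ha_sup hcp1 hcp)
  have hpj := hpivot j hj1 hjn
  have hsweep : xj j - xj1 j = -cp j * -xj1 (j + 1) := by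
    have h := (isHomSolS_sub hxj hxj1).eq_neg_mul_succ (ha_diag 1 le_rfl (by omega)).ne' hcp1
      (fun i hi hij => (hpivot i hi (by omega)).ne') (fun i hi hij => hcp i hi (by omega))
      j hj1 le_rfl
    simpa only [le_refl, if_true, show ¬ j + 1 ≤ j by omega, if_false] using h
  have hlast := hxj1 (j + 1) (by omega) le_rfl
  rw [if_pos (by omega), if_neg (by omega), if_neg (by omega), Nat.add_sub_cancel] at hlast
  have hx : xj1 (j + 1) = I / (a (j + 1) (j + 1) + a (j + 1) j * cp j) := by
    rw [eq_div_iff hpj.ne', hI]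
    linear_combination -hlast - a (j + 1) j * hsweep
  exact ⟨hpj, hx, sign_iff_of_eq_div hpj hx⟩

/-- (Invasion rates and positive solutions.)  For `1 ≤ j ≤ n−1`, with the
forward-sweep coefficients `c_1' = a_{12}/a_{11}`,
`c_i' = a_{i,i+1}/(a_{ii} + a_{i,i−1} c_{i−1}')`, the unique solution of the system
`(S_{j+1})` satisfies `x_{j+1}^{(j+1)} = I_{j+1}/(a_{j+1,j+1} + a_{j+1,j} c_j')`,
where the denominator is strictly positive and
`I_{j+1} = −ã_{j+1,0} + a_{j+1,j} x_j^{(j)}`.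
In particular `x_{j+1}^{(j+1)} > 0 ↔ I_{j+1} > 0`, `x_{j+1}^{(j+1)} = 0 ↔ I_{j+1} = 0`,
and `x_{j+1}^{(j+1)} < 0 ↔ I_{j+1} < 0`. -/
theorem stmt3 (n : ℕ) (hn : 2 ≤ n) (a : ℕ → ℕ → ℝ) (ta : ℕ → ℝ)
    (ha_diag : ∀ i, 1 ≤ i → i ≤ n → 0 < a i i)
    (ha_sub : ∀ i, 2 ≤ i → i ≤ n → 0 < a i (i - 1))
    (ha_sup : ∀ i, 1 ≤ i → i ≤ n - 1 → 0 < a i (i + 1))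
    (hta : ∀ i, 2 ≤ i → i ≤ n → 0 < ta i)
    (cp : ℕ → ℝ)
    (hcp1 : cp 1 = a 1 2 / a 1 1)
    (hcp : ∀ i, 2 ≤ i → i ≤ n - 1 →
      cp i = a i (i + 1) / (a i i + a i (i - 1) * cp (i - 1)))
    (j : ℕ) (hj1 : 1 ≤ j) (hjn : j ≤ n - 1)
    (xj xj1 : ℕ → ℝ)
    (hxj : IsSolS a ta j xj) (hxj1 : IsSolS a ta (j + 1) xj1)
    (I : ℝ) (hI : I = -ta (j + 1) + a (j + 1) j * xj j) :
    0 < a (j + 1) (j + 1) + a (j + 1) j * cp j ∧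
    xj1 (j + 1) = I / (a (j + 1) (j + 1) + a (j + 1) j * cp j) ∧
    (0 < xj1 (j + 1) ↔ 0 < I) ∧
    (xj1 (j + 1) = 0 ↔ I = 0) ∧
    (xj1 (j + 1) < 0 ↔ I < 0) :=
  stmt3_general n a ta ha_diag ha_sub ha_sup cp hcp1 hcp j hj1 hjn xj xj1 hxj hxj1 I hI
end

section
/- (Lemma, first claim.) For every 1 ≤ k ≤ n−1: if I_k ≤ 0, then I_{k+1} < 0. -/
/-!
Extend each `x^{(j)}` by zero outside `1..j` (`x^{(0)} = 0`). The difference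
`y = x^{(k)} - x^{(k-1)}` vanishes at `0` and `k + 1`, solves the homogeneous tridiagonal equations
in the rows `i < k`, and its row `k` equals `-I_k`: the invasion rate is the residual of
`x^{(k-1)}` in the first equation it does not see. Multiplying row `i` by `y_i` shows that
consecutive terms of `y` have weakly opposite signs, so `y_k > 0` would make row `k` negative.
Hence `I_k ≤ 0` forces `x^{(k)}_k = y_k ≤ 0`, and `I_{k+1} = -ã_{k+1,0} + a_{k+1,k} x^{(k)}_k < 0`.
-/

open Set

def triRow (a : ℕ → ℕ → ℝ) (y : ℕ → ℝ) (i : ℕ) : ℝ :=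
  a i (i - 1) * y (i - 1) - a i i * y i - a i (i + 1) * y (i + 1)

lemma triRow_sub (a : ℕ → ℕ → ℝ) (y z : ℕ → ℝ) (i : ℕ) :
    triRow a (y - z) i = triRow a y i - triRow a z i := by
  simp only [triRow, Pi.sub_apply]
  ring

section SignAlternation

variable {a : ℕ → ℕ → ℝ} {y : ℕ → ℝ} {m : ℕ}

lemma subdiag_mul_mul_nonpos (hy0 : y 0 = 0) {i : ℕ} (hi : 1 ≤ i)
    (hsub : 2 ≤ i → 0 ≤ a i (i - 1)) (h : y (i - 1) * y i ≤ 0) :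
    a i (i - 1) * (y (i - 1) * y i) ≤ 0 := by
  rcases (by omega : i = 1 ∨ 2 ≤ i) with rfl | hi2
  · simp [hy0]
  · exact mul_nonpos_of_nonneg_of_nonpos (hsub hi2) h

theorem mul_succ_nonpos_of_triRow_eq_zero (hy0 : y 0 = 0)
    (hdiag : ∀ i, 1 ≤ i → i < m → 0 ≤ a i i)
    (hsub : ∀ i, 2 ≤ i → i < m → 0 ≤ a i (i - 1))
    (hsup : ∀ i, 1 ≤ i → i < m → 0 < a i (i + 1))
    (hrow : ∀ i, 1 ≤ i → i < m → triRow a y i = 0) :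
    ∀ i < m, y i * y (i + 1) ≤ 0 := by
  intro i
  induction i with
  | zero => simp [hy0]
  | succ i ih =>
    intro hi
    have hprev := subdiag_mul_mul_nonpos (a := a) (i := i + 1) hy0 (by omega)
      (fun h => hsub (i + 1) h hi) (by simpa using ih (by omega))
    have hrow' := hrow (i + 1) (by omega) hi
    simp only [triRow, Nat.add_sub_cancel] at hrow' hprev
    have hdiag' := hdiag (i + 1) (by omega) hi
    have key : a (i + 1) (i + 1 + 1) * (y (i + 1) * y (i + 1 + 1)) ≤ 0 :=
      calc _ = a (i + 1) i * (y i * y (i + 1)) - a (i + 1) (i + 1) * (y (i + 1) * y (i + 1)) := by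
            linear_combination (-y (i + 1)) * hrow'
        _ ≤ 0 := by nlinarith [mul_nonneg hdiag' (mul_self_nonneg (y (i + 1)))]
    exact nonpos_of_mul_nonpos_right key (hsup (i + 1) (by omega) hi)

theorem nonpos_of_triRow_nonneg (hy0 : y 0 = 0) (hm : 1 ≤ m) (hym : y (m + 1) = 0)
    (hdiag : ∀ i, 1 ≤ i → i ≤ m → 0 < a i i)
    (hsub : ∀ i, 2 ≤ i → i ≤ m → 0 ≤ a i (i - 1))
    (hsup : ∀ i, 1 ≤ i → i < m → 0 < a i (i + 1))
    (hrow : ∀ i, 1 ≤ i → i < m → triRow a y i = 0)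
    (hlast : 0 ≤ triRow a y m) : y m ≤ 0 := by
  have halt := mul_succ_nonpos_of_triRow_eq_zero hy0 (fun i h1 h2 => (hdiag i h1 h2.le).le)
    (fun i h1 h2 => hsub i h1 h2.le) hsup hrow (m - 1) (by omega)
  rw [Nat.sub_add_cancel hm] at halt
  have hprev := subdiag_mul_mul_nonpos hy0 hm (hsub m · le_rfl) halt
  simp only [triRow, hym, mul_zero, sub_zero] at hlast
  by_contra! hpos
  nlinarith [mul_pos (hdiag m hm le_rfl) (mul_pos hpos hpos), mul_nonneg hlast hpos.le]

end SignAlternation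

section Solutions

variable {a : ℕ → ℕ → ℝ} {ta : ℕ → ℝ}

lemma isSolS_zero (x : ℕ → ℝ) : IsSolS a ta 0 x :=
  fun _ h1 h2 => absurd (h1.trans h2) (by norm_num)

lemma IsSolS.triRow_indicator {j : ℕ} {x : ℕ → ℝ} (h : IsSolS a ta j x) {i : ℕ} (hi : 1 ≤ i)
    (hij : i ≤ j) : triRow a ((Icc 1 j).indicator x) i = if i = 1 then -ta 1 else ta i := by
  have hrow := h i hi hij
  simp only [triRow, indicator_apply, mem_Icc]
  split_ifs at hrow ⊢ <;> first | omega | linarith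

lemma triRow_indicator_Icc_succ (a : ℕ → ℕ → ℝ) (x : ℕ → ℝ) (j : ℕ) :
    triRow a ((Icc 1 j).indicator x) (j + 1) = a (j + 1) j * (Icc 1 j).indicator x j := by
  simp [triRow, indicator_apply]

lemma IsSolS.triRow_indicator_sub_eq_zero {j : ℕ} {u v : ℕ → ℝ} (hu : IsSolS a ta (j + 1) u)
    (hv : IsSolS a ta j v) {i : ℕ} (hi : 1 ≤ i) (hij : i ≤ j) :
    triRow a ((Icc 1 (j + 1)).indicator u - (Icc 1 j).indicator v) i = 0 := by
  rw [triRow_sub, hu.triRow_indicator hi (by omega), hv.triRow_indicator hi hij, sub_self]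

lemma IsSolS.triRow_indicator_sub_succ {j : ℕ} {u : ℕ → ℝ} (hu : IsSolS a ta (j + 1) u)
    (v : ℕ → ℝ) :
    triRow a ((Icc 1 (j + 1)).indicator u - (Icc 1 j).indicator v) (j + 1) =
      (if j = 0 then -ta 1 else ta (j + 1)) - a (j + 1) j * (Icc 1 j).indicator v j := by
  rw [triRow_sub, hu.triRow_indicator le_add_self le_rfl, triRow_indicator_Icc_succ]
  simp

end Solutions

theorem stmt4_general (n : ℕ) (a : ℕ → ℕ → ℝ) (ta : ℕ → ℝ)
    (ha_diag : ∀ i, 1 ≤ i → i ≤ n → 0 < a i i)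
    (ha_sub : ∀ i, 2 ≤ i → i ≤ n → 0 < a i (i - 1))
    (ha_sup : ∀ i, 1 ≤ i → i ≤ n - 1 → 0 < a i (i + 1))
    (hta : ∀ i, 2 ≤ i → i ≤ n → 0 < ta i)
    (x : ℕ → ℕ → ℝ)
    (hx : ∀ j, 1 ≤ j → j ≤ n → IsSolS a ta j (x j))
    (I : ℕ → ℝ)
    (hI1 : I 1 = ta 1)
    (hI : ∀ j, 1 ≤ j → j ≤ n - 1 → I (j + 1) = -ta (j + 1) + a (j + 1) j * x j j) :
    ∀ k, 1 ≤ k → k ≤ n - 1 → I k ≤ 0 → I (k + 1) < 0 := by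
  intro k hk1 hkn hIk
  obtain ⟨j, rfl⟩ : ∃ j, k = j + 1 := ⟨k - 1, by omega⟩
  have hcur := hx (j + 1) hk1 (by omega)
  have hprev : IsSolS a ta j (x j) := by
    rcases Nat.eq_zero_or_pos j with rfl | hj
    · exact isSolS_zero _
    · exact hx j hj (by omega)
  set y := (Icc 1 (j + 1)).indicator (x (j + 1)) - (Icc 1 j).indicator (x j) with hy
  have hres : triRow a y (j + 1) = -I (j + 1) := by
    rw [hy, hcur.triRow_indicator_sub_succ]
    rcases Nat.eq_zero_or_pos j with rfl | hj
    · simp [hI1]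
    · rw [hI j hj (by omega), if_neg hj.ne', indicator_of_mem (mem_Icc.2 ⟨hj, le_rfl⟩)]
      ring
  have hxk : x (j + 1) (j + 1) ≤ 0 := by
    have := nonpos_of_triRow_nonneg (y := y) (m := j + 1) (by simp [hy]) hk1
      (by simp [hy]) (fun i h1 h2 => ha_diag i h1 (by omega))
      (fun i h1 h2 => (ha_sub i h1 (by omega)).le) (fun i h1 h2 => ha_sup i h1 (by omega))
      (fun i h1 h2 => hcur.triRow_indicator_sub_eq_zero hprev h1 (by omega))
      (by rw [hres]; linarith)
    simpa [hy] using this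
  rw [hI (j + 1) hk1 hkn]
  have hsub : 0 < a (j + 1 + 1) (j + 1) := by simpa using ha_sub (j + 1 + 1) (by omega) (by omega)
  linarith [mul_nonpos_of_nonneg_of_nonpos hsub.le hxk, hta (j + 1 + 1) (by omega) (by omega)]

/-- (Lemma, first claim.)  With the invasion rates `I_1 = ã_{10}` and
`I_{j+1} = −ã_{j+1,0} + a_{j+1,j} x_j^{(j)}` (where `x^{(j)}` is the unique solution
of `(S_j)`), for every `1 ≤ k ≤ n−1`: if `I_k ≤ 0` then `I_{k+1} < 0`. -/
theorem stmt4 (n : ℕ) (hn : 2 ≤ n) (a : ℕ → ℕ → ℝ) (ta : ℕ → ℝ)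
    (ha_diag : ∀ i, 1 ≤ i → i ≤ n → 0 < a i i)
    (ha_sub : ∀ i, 2 ≤ i → i ≤ n → 0 < a i (i - 1))
    (ha_sup : ∀ i, 1 ≤ i → i ≤ n - 1 → 0 < a i (i + 1))
    (hta : ∀ i, 2 ≤ i → i ≤ n → 0 < ta i)
    (x : ℕ → ℕ → ℝ)
    (hx : ∀ j, 1 ≤ j → j ≤ n → IsSolS a ta j (x j))
    (I : ℕ → ℝ)
    (hI1 : I 1 = ta 1)
    (hI : ∀ j, 1 ≤ j → j ≤ n - 1 → I (j + 1) = -ta (j + 1) + a (j + 1) j * x j j) :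
    ∀ k, 1 ≤ k → k ≤ n - 1 → I k ≤ 0 → I (k + 1) < 0 :=
  stmt4_general n a ta ha_diag ha_sub ha_sup hta x hx I hI1 hI
end

section
/- (Proposition.) Suppose there exists j* with 1 ≤ j* ≤ n−1 such that I_{j*+1} < 0. Then for every m with j*+1 ≤ m ≤ n, the unique solution of the system (S_m) satisfies x_m^{(m)} < 0; in particular, for every such m the system (S_m) has no solution with all coordinates strictly positive. -/
namespace Tridiagonal

def rhs (ta : ℕ → ℝ) (i : ℕ) : ℝ := if i = 1 then -ta 1 else ta i

/-- The elimination factor `β_i`; starting from `β_0 = 0` makes the first row no special case. -/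
noncomputable def elimFactor (a : ℕ → ℕ → ℝ) : ℕ → ℝ
  | 0 => 0
  | i + 1 => a (i + 1) (i + 2) / (a (i + 1) (i + 1) + a (i + 1) i * elimFactor a i)

noncomputable def pivot (a : ℕ → ℕ → ℝ) (i : ℕ) : ℝ :=
  a i i + a i (i - 1) * elimFactor a (i - 1)

noncomputable def elimConst (a : ℕ → ℕ → ℝ) (ta : ℕ → ℝ) : ℕ → ℝ
  | 0 => 0
  | i + 1 => (a (i + 1) i * elimConst a ta i - rhs ta (i + 1)) / pivot a (i + 1)

variable {a : ℕ → ℕ → ℝ} {ta : ℕ → ℝ}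

theorem elimFactor_succ (i : ℕ) : elimFactor a (i + 1) = a (i + 1) (i + 2) / pivot a (i + 1) :=
  rfl

theorem pivot_pos {n : ℕ} (hdiag : ∀ i, 1 ≤ i → i ≤ n → 0 < a i i)
    (hsub : ∀ i, 2 ≤ i → i ≤ n → 0 ≤ a i (i - 1)) (hsup : ∀ i, 1 ≤ i → i < n → 0 ≤ a i (i + 1)) :
    ∀ i, 1 ≤ i → i ≤ n → 0 < pivot a i := by
  have key : ∀ k, k + 1 ≤ n → 0 ≤ elimFactor a k ∧ 0 < pivot a (k + 1) := by
    intro k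
    induction k with
    | zero =>
      intro hn
      simpa [elimFactor, pivot] using hdiag 1 le_rfl hn
    | succ k ih =>
      intro hn
      obtain ⟨-, hpiv⟩ := ih (by omega)
      have hfac : 0 ≤ elimFactor a (k + 1) :=
        div_nonneg (hsup (k + 1) (by omega) (by omega)) hpiv.le
      have hsub' : 0 ≤ a (k + 2) (k + 1) := by simpa using hsub (k + 2) (by omega) hn
      refine ⟨hfac, ?_⟩
      show 0 < a (k + 2) (k + 2) + a (k + 2) (k + 1) * elimFactor a (k + 1)
      exact add_pos_of_pos_of_nonneg (hdiag (k + 2) (by omega) hn) (mul_nonneg hsub' hfac)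
  intro i hi hin
  obtain ⟨k, rfl⟩ : ∃ k, i = k + 1 := ⟨i - 1, by omega⟩
  exact (key k hin).2

theorem eq_elimConst_sub_of_row {k : ℕ} {t u : ℝ} (hpiv : pivot a (k + 1) ≠ 0)
    (hrow : a (k + 1) k * (elimConst a ta k - elimFactor a k * t) - a (k + 1) (k + 1) * t - u
      = rhs ta (k + 1)) :
    t = elimConst a ta (k + 1) - u / pivot a (k + 1) := by
  rw [elimConst, eq_sub_iff_add_eq, eq_div_iff hpiv, add_mul, div_mul_cancel₀ _ hpiv]
  simp only [pivot, Nat.add_sub_cancel]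
  linear_combination -hrow

theorem _root_.IsSolS.eq_elimConst_sub {m : ℕ} {y : ℕ → ℝ} (hy : IsSolS a ta m y)
    (hpiv : ∀ i, 1 ≤ i → i ≤ m → pivot a i ≠ 0) :
    ∀ k, k + 1 ≤ m →
      y (k + 1) = elimConst a ta (k + 1) -
        if k + 1 < m then elimFactor a (k + 1) * y (k + 2) else 0 := by
  have step : ∀ k, k + 1 ≤ m →
      (if 2 ≤ k + 1 then a (k + 1) (k + 1 - 1) * y (k + 1 - 1) else 0)
        = a (k + 1) k * (elimConst a ta k - elimFactor a k * y (k + 1)) →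
      y (k + 1) = elimConst a ta (k + 1) -
        if k + 1 < m then elimFactor a (k + 1) * y (k + 2) else 0 := by
    intro k hk hlower
    have hrow := hy (k + 1) le_add_self hk
    rw [hlower] at hrow
    refine (eq_elimConst_sub_of_row (hpiv (k + 1) le_add_self hk) hrow).trans ?_
    split_ifs
    · rw [elimFactor_succ]; ring
    · rw [zero_div]
  intro k
  induction k with
  | zero =>
    refine fun hm ↦ step 0 hm ?_
    simp [elimConst, elimFactor]
  | succ k ih =>
    refine fun hm ↦ step (k + 1) hm ?_
    rw [if_pos (by omega), Nat.add_sub_cancel, ih (by omega), if_pos (by omega)]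

theorem _root_.IsSolS.last_eq_elimConst {m : ℕ} {y : ℕ → ℝ} (hy : IsSolS a ta m y) (hm : 1 ≤ m)
    (hpiv : ∀ i, 1 ≤ i → i ≤ m → pivot a i ≠ 0) : y m = elimConst a ta m := by
  obtain ⟨k, rfl⟩ : ∃ k, m = k + 1 := ⟨m - 1, by omega⟩
  simpa using hy.eq_elimConst_sub hpiv k le_rfl

theorem elimConst_succ_neg {j : ℕ} (hj : 1 ≤ j) (hpiv : 0 < pivot a (j + 1))
    (h : a (j + 1) j * elimConst a ta j < ta (j + 1)) : elimConst a ta (j + 1) < 0 := by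
  rw [elimConst, rhs, if_neg (by omega)]
  exact div_neg_of_neg_of_pos (by linarith) hpiv

theorem elimConst_neg {n j : ℕ} (hj : 1 ≤ j) (hpiv : ∀ i, 1 ≤ i → i ≤ n → 0 < pivot a i)
    (hsub : ∀ i, 2 ≤ i → i ≤ n → 0 ≤ a i (i - 1)) (hta : ∀ i, 2 ≤ i → i ≤ n → 0 < ta i)
    (hstart : a (j + 1) j * elimConst a ta j < ta (j + 1)) :
    ∀ m, j < m → m ≤ n → elimConst a ta m < 0 := by
  intro m hjm
  induction m, hjm using Nat.le_induction with
  | base => exact fun hn ↦ elimConst_succ_neg hj (hpiv _ le_add_self hn) hstart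
  | succ m hjm ih =>
    intro hn
    have hsub' : 0 ≤ a (m + 1) m := by simpa using hsub (m + 1) (by omega) hn
    exact elimConst_succ_neg (by omega) (hpiv _ le_add_self hn)
      ((mul_nonpos_of_nonneg_of_nonpos hsub' (ih (by omega)).le).trans_lt (hta _ (by omega) hn))

end Tridiagonal

theorem stmt5_general (n : ℕ) (a : ℕ → ℕ → ℝ) (ta : ℕ → ℝ)
    (ha_diag : ∀ i, 1 ≤ i → i ≤ n → 0 < a i i)
    (ha_sub : ∀ i, 2 ≤ i → i ≤ n → 0 < a i (i - 1))
    (ha_sup : ∀ i, 1 ≤ i → i ≤ n - 1 → 0 < a i (i + 1))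
    (hta : ∀ i, 2 ≤ i → i ≤ n → 0 < ta i)
    (x : ℕ → ℕ → ℝ)
    (hx : ∀ j, 1 ≤ j → j ≤ n → IsSolS a ta j (x j))
    (I : ℕ → ℝ)
    (hI : ∀ j, 1 ≤ j → j ≤ n - 1 → I (j + 1) = -ta (j + 1) + a (j + 1) j * x j j)
    (js : ℕ) (hjs1 : 1 ≤ js) (hjsn : js ≤ n - 1)
    (hneg : I (js + 1) < 0) :
    ∀ m, js + 1 ≤ m → m ≤ n →
      x m m < 0 ∧
      ∀ y : ℕ → ℝ, IsSolS a ta m y → ¬(∀ i, 1 ≤ i → i ≤ m → 0 < y i) := by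
  intro m hm hmn
  have hsub i h1 h2 : 0 ≤ a i (i - 1) := (ha_sub i h1 h2).le
  have hpiv := Tridiagonal.pivot_pos ha_diag hsub fun i h1 h2 ↦ (ha_sup i h1 (by omega)).le
  have hlast j y (h1 : 1 ≤ j) (h2 : j ≤ n) (hy : IsSolS a ta j y) :
      y j = Tridiagonal.elimConst a ta j :=
    hy.last_eq_elimConst h1 fun i hi hij ↦ (hpiv i hi (hij.trans h2)).ne'
  have hstart : a (js + 1) js * Tridiagonal.elimConst a ta js < ta (js + 1) := by
    have hIjs := hI js hjs1 hjsn
    rw [hlast js (x js) hjs1 (by omega) (hx js hjs1 (by omega))] at hIjs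
    linarith
  have hα := Tridiagonal.elimConst_neg hjs1 hpiv hsub hta hstart m hm hmn
  refine ⟨hlast m (x m) (by omega) hmn (hx m (by omega) hmn) ▸ hα, fun y hy hpos ↦ ?_⟩
  exact (hpos m (by omega) le_rfl).not_gt (hlast m y (by omega) hmn hy ▸ hα)

/-- (Proposition.)  If there is `1 ≤ j* ≤ n−1` with `I_{j*+1} < 0`, then for every
`j*+1 ≤ m ≤ n` the unique solution of `(S_m)` satisfies `x_m^{(m)} < 0`; in
particular, for every such `m` the system `(S_m)` has no solution with all
coordinates strictly positive. -/
theorem stmt5 (n : ℕ) (hn : 2 ≤ n) (a : ℕ → ℕ → ℝ) (ta : ℕ → ℝ)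
    (ha_diag : ∀ i, 1 ≤ i → i ≤ n → 0 < a i i)
    (ha_sub : ∀ i, 2 ≤ i → i ≤ n → 0 < a i (i - 1))
    (ha_sup : ∀ i, 1 ≤ i → i ≤ n - 1 → 0 < a i (i + 1))
    (hta : ∀ i, 2 ≤ i → i ≤ n → 0 < ta i)
    (x : ℕ → ℕ → ℝ)
    (hx : ∀ j, 1 ≤ j → j ≤ n → IsSolS a ta j (x j))
    (I : ℕ → ℝ)
    (hI1 : I 1 = ta 1)
    (hI : ∀ j, 1 ≤ j → j ≤ n - 1 → I (j + 1) = -ta (j + 1) + a (j + 1) j * x j j)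
    (js : ℕ) (hjs1 : 1 ≤ js) (hjsn : js ≤ n - 1)
    (hneg : I (js + 1) < 0) :
    ∀ m, js + 1 ≤ m → m ≤ n →
      x m m < 0 ∧
      ∀ y : ℕ → ℝ, IsSolS a ta m y → ¬(∀ i, 1 ≤ i → i ≤ m → 0 < y i) :=
  stmt5_general n a ta ha_diag ha_sub ha_sup hta x hx I hI js hjs1 hjsn hneg
end

section
/- Fix 1 ≤ j ≤ n and view the last coordinate x_j^{(j)} of the unique solution of (S_j) as a function of the vector (ã_{10}, ã_{20}, …, ã_{j0}) ∈ ℝ^j (the interaction coefficients a being fixed; the system is uniquely solvable for all values of the ã's). Then x_j^{(j)} is strictly increasing in ã_{10}, and strictly decreasing in ã_{i0} for every 2 ≤ i ≤ j. -/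
structure IsPosTridiag (a : ℕ → ℕ → ℝ) (j : ℕ) : Prop where
  diag : ∀ i, 1 ≤ i → i ≤ j → 0 < a i i
  subdiag : ∀ i, 1 ≤ i → i < j → 0 < a (i + 1) i
  superdiag : ∀ i, 1 ≤ i → i < j → 0 < a i (i + 1)

theorem IsPosTridiag.coupling_nonneg {a : ℕ → ℕ → ℝ} {y : ℕ → ℝ} {j : ℕ} (ha : IsPosTridiag a j)
    {i : ℕ} (hi : 1 ≤ i) (hy : i < j → 0 ≤ y (i + 1)) :
    0 ≤ if i < j then a i (i + 1) * y (i + 1) else 0 := by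
  split_ifs with hij
  · exact mul_nonneg (ha.superdiag i hi hij).le (hy hij)
  · exact le_rfl

namespace IsSolS

variable {a : ℕ → ℕ → ℝ} {d y : ℕ → ℝ} {j : ℕ}

theorem sub {ta ta' x x' : ℕ → ℝ} (hx : IsSolS a ta j x) (hx' : IsSolS a ta' j x') :
    IsSolS a (ta - ta') j (x - x') := by
  intro i hi hij
  have h := hx i hi hij
  have h' := hx' i hi hij
  simp only [Pi.sub_apply, mul_sub]
  split_ifs at h h' ⊢ <;> linarith

theorem row_one (hy : IsSolS a d j y) (hj : 1 ≤ j) :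
    a 1 1 * y 1 + (if 1 < j then a 1 2 * y 2 else 0) = d 1 := by
  have h := hy 1 le_rfl hj
  rw [if_neg (by norm_num), if_pos rfl] at h
  linarith

theorem row_succ (hy : IsSolS a d j y) {i : ℕ} (hi : 1 ≤ i) (hij : i < j) :
    a (i + 1) i * y i =
      a (i + 1) (i + 1) * y (i + 1) + (if i + 1 < j then a (i + 1) (i + 2) * y (i + 2) else 0)
        + d (i + 1) := by
  have h := hy (i + 1) (by omega) hij
  rw [if_pos (show 2 ≤ i + 1 by omega), if_neg (show i + 1 ≠ 1 by omega), Nat.add_sub_cancel] at h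
  linarith

theorem le_subdiag_mul (hy : IsSolS a d j y) (ha : IsPosTridiag a j) {i : ℕ} (hi : 1 ≤ i)
    (hij : i < j) (hy₂ : i + 1 < j → 0 ≤ y (i + 2)) :
    a (i + 1) (i + 1) * y (i + 1) + d (i + 1) ≤ a (i + 1) i * y i := by
  have := ha.coupling_nonneg (i := i + 1) (by omega) hy₂
  linarith [hy.row_succ hi hij]

theorem nonneg (hy : IsSolS a d j y) (ha : IsPosTridiag a j) (hyj : 0 ≤ y j)
    (hd : ∀ i, 2 ≤ i → i ≤ j → 0 ≤ d i) {i : ℕ} (hi : 1 ≤ i) (hij : i ≤ j) : 0 ≤ y i := by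
  induction hk : j - i using Nat.strong_induction_on generalizing i with
  | _ k ih =>
    rcases hij.eq_or_lt with rfl | hlt
    · exact hyj
    have hy₁ : 0 ≤ y (i + 1) := ih _ (by omega) (by omega) hlt rfl
    have hy₂ (h : i + 1 < j) : 0 ≤ y (i + 2) := ih _ (by omega) (by omega) h rfl
    have hrow := hy.le_subdiag_mul ha hi hlt hy₂
    have := mul_nonneg (ha.diag (i + 1) (by omega) hlt).le hy₁
    have := hd (i + 1) (by omega) hlt
    exact nonneg_of_mul_nonneg_right (by linarith) (ha.subdiag i hi hlt)

theorem pos_of_lt (hy : IsSolS a d j y) (ha : IsPosTridiag a j) (hyj : 0 ≤ y j)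
    (hd : ∀ i, 2 ≤ i → i ≤ j → 0 ≤ d i) {u : ℕ} (huj : u ≤ j) (hdu : 0 < d u) {i : ℕ} (hi : 1 ≤ i) (hiu : i < u) :
    0 < y i := by
  induction hk : u - i using Nat.strong_induction_on generalizing i with
  | _ k ih =>
    have hy₂ (h : i + 1 < j) : 0 ≤ y (i + 2) := hy.nonneg ha hyj hd (by omega) h
    have hrow := hy.le_subdiag_mul ha hi (by omega) hy₂
    have hdiag := ha.diag (i + 1) (by omega) (by omega)
    have hd₁ := hd (i + 1) (by omega) (by omega)
    have hstep : 0 < a (i + 1) (i + 1) * y (i + 1) + d (i + 1) := by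
      rcases (show i + 1 = u ∨ i + 1 < u by omega) with rfl | hlt
      · have := mul_nonneg hdiag.le (hy.nonneg ha hyj hd (by omega) huj)
        linarith
      · have := mul_pos hdiag (ih _ (by omega) (by omega) hlt rfl)
        linarith
    exact pos_of_mul_pos_right (by linarith) (ha.subdiag i hi (by omega)).le

theorem rhs_one_nonneg (hy : IsSolS a d j y) (ha : IsPosTridiag a j) (hj : 1 ≤ j)
    (hyj : 0 ≤ y j) (hd : ∀ i, 2 ≤ i → i ≤ j → 0 ≤ d i) : 0 ≤ d 1 := by
  have := ha.coupling_nonneg le_rfl fun h => hy.nonneg ha hyj hd (by omega) h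
  have := mul_nonneg (ha.diag 1 le_rfl hj).le (hy.nonneg ha hyj hd le_rfl hj)
  linarith [hy.row_one hj]

theorem rhs_one_pos (hy : IsSolS a d j y) (ha : IsPosTridiag a j) (hyj : 0 ≤ y j)
    (hd : ∀ i, 2 ≤ i → i ≤ j → 0 ≤ d i) {u : ℕ} (hu : 2 ≤ u) (huj : u ≤ j) (hdu : 0 < d u) :
    0 < d 1 := by
  have := ha.coupling_nonneg le_rfl fun h => hy.nonneg ha hyj hd (by omega) h
  have := mul_pos (ha.diag 1 le_rfl (by omega)) (hy.pos_of_lt ha hyj hd huj hdu le_rfl hu)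
  linarith [hy.row_one (by omega)]

end IsSolS

theorem stmt7_general (n : ℕ) (a : ℕ → ℕ → ℝ)
    (ha_diag : ∀ i, 1 ≤ i → i ≤ n → 0 < a i i)
    (ha_sub : ∀ i, 2 ≤ i → i ≤ n → 0 < a i (i - 1))
    (ha_sup : ∀ i, 1 ≤ i → i ≤ n - 1 → 0 < a i (i + 1))
    (j : ℕ) (hj1 : 1 ≤ j) (hjn : j ≤ n)
    (ta ta' : ℕ → ℝ) (x x' : ℕ → ℝ)
    (hx : IsSolS a ta j x) (hx' : IsSolS a ta' j x') :
    ((ta 1 < ta' 1 ∧ ∀ i, 2 ≤ i → i ≤ j → ta i = ta' i) → x j < x' j) ∧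
    (∀ u, 2 ≤ u → u ≤ j →
      (ta u < ta' u ∧ ∀ i, 1 ≤ i → i ≤ j → i ≠ u → ta i = ta' i) → x' j < x j) := by
  have ha : IsPosTridiag a j :=
    ⟨fun i hi hij => ha_diag i hi (by omega),
      fun i hi hij => by simpa using ha_sub (i + 1) (by omega) (by omega),
      fun i hi hij => ha_sup i hi (by omega)⟩
  refine ⟨fun ⟨h₁, hrest⟩ => ?_, fun u hu huj ⟨hu_lt, hrest⟩ => ?_⟩
  · by_contra! hle
    have := (hx.sub hx').rhs_one_nonneg ha hj1 (sub_nonneg.mpr hle) fun i hi hij => by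
      simp [hrest i hi hij]
    simp only [Pi.sub_apply, sub_nonneg] at this
    linarith
  · by_contra! hle
    have := (hx'.sub hx).rhs_one_pos ha (sub_nonneg.mpr hle)
      (fun i hi hij => by
        rcases eq_or_ne i u with rfl | hiu
        · simpa using hu_lt.le
        · simp [hrest i (by omega) hij hiu])
      hu huj (sub_pos.mpr hu_lt)
    simp [hrest 1 le_rfl hj1 (by omega)] at this

/-- Viewing the last coordinate `x_j^{(j)}` of the unique solution of `(S_j)` as a
function of `(ã_{10}, …, ã_{j0}) ∈ ℝ^j` (the interaction coefficients `a` being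
fixed), `x_j^{(j)}` is strictly increasing in `ã_{10}` and strictly decreasing in
`ã_{i0}` for every `2 ≤ i ≤ j`. -/
theorem stmt7 (n : ℕ) (hn : 1 ≤ n) (a : ℕ → ℕ → ℝ)
    (ha_diag : ∀ i, 1 ≤ i → i ≤ n → 0 < a i i)
    (ha_sub : ∀ i, 2 ≤ i → i ≤ n → 0 < a i (i - 1))
    (ha_sup : ∀ i, 1 ≤ i → i ≤ n - 1 → 0 < a i (i + 1))
    (j : ℕ) (hj1 : 1 ≤ j) (hjn : j ≤ n)
    (ta ta' : ℕ → ℝ) (x x' : ℕ → ℝ)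
    (hx : IsSolS a ta j x) (hx' : IsSolS a ta' j x') :
    ((ta 1 < ta' 1 ∧ ∀ i, 2 ≤ i → i ≤ j → ta i = ta' i) → x j < x' j) ∧
    (∀ u, 2 ≤ u → u ≤ j →
      (ta u < ta' u ∧ ∀ i, 1 ≤ i → i ≤ j → i ≠ u → ta i = ta' i) → x' j < x j) :=
  stmt7_general n a ha_diag ha_sub ha_sup j hj1 hjn ta ta' x x' hx hx'
end

section
/- (Monotonicity of the invasion rates in the noise intensities.) Set ã_{10} := a_{10} − σ_1/2 and ã_{i0} := a_{i0} + σ_i/2 for 2 ≤ i ≤ n, where a_{10} ∈ ℝ, a_{i0} > 0 and (σ_1,…,σ_n) ∈ [0,∞)^n. Then for every 1 ≤ j ≤ n, the invasion rate I_j, viewed as a function of (σ_1,…,σ_n), is strictly decreasing in σ_u for each 1 ≤ u ≤ j, and does not depend on σ_u for u > j. -/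
/-- The right-hand side of row `i` of `(S_j)`, with the sign of row `1` flipped so that every row
reads `a_{i,i-1} x_{i-1} = signedRhs ã i + a_{ii} x_i + a_{i,i+1} x_{i+1}`. -/
def signedRhs (r : ℕ → ℝ) (i : ℕ) : ℝ := if i = 1 then -r 1 else r i

lemma signedRhs_neg (r : ℕ → ℝ) (i : ℕ) : signedRhs (-r) i = -signedRhs r i := by
  unfold signedRhs
  split_ifs <;> simp

structure TridiagSignCond (a : ℕ → ℕ → ℝ) (j : ℕ) : Prop where
  diag_pos : ∀ i, 1 ≤ i → i ≤ j → 0 < a i i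
  sub_pos : ∀ i, 2 ≤ i → i ≤ j → 0 < a i (i - 1)
  sup_nonneg : ∀ i, 1 ≤ i → i < j → 0 ≤ a i (i + 1)

namespace IsSolS

variable {a : ℕ → ℕ → ℝ} {r r' d d' : ℕ → ℝ} {j : ℕ}

lemma sub_s8 (h : IsSolS a r j d) (h' : IsSolS a r' j d') : IsSolS a (r' - r) j (d' - d) := by
  intro i h1 h2
  have e := h i h1 h2
  have e' := h' i h1 h2
  simp only [Pi.sub_apply]
  split_ifs at e e' ⊢ <;> linear_combination e' - e

lemma neg (h : IsSolS a r j d) : IsSolS a (-r) j (-d) := by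
  intro i h1 h2
  have e := h i h1 h2
  simp only [Pi.neg_apply]
  split_ifs at e ⊢ <;> linear_combination -e

lemma row (h : IsSolS a r j d) {i : ℕ} (h1 : 1 ≤ i) (h2 : i ≤ j) :
    (if 2 ≤ i then a i (i - 1) * d (i - 1) else 0)
      = signedRhs r i + a i i * d i + (if i < j then a i (i + 1) * d (i + 1) else 0) := by
  have e := h i h1 h2
  unfold signedRhs
  linarith

variable (hA : TridiagSignCond a j) (hs : ∀ i, 1 ≤ i → i ≤ j → 0 ≤ signedRhs r i)
include hA hs

lemma nonneg_of_last_nonneg (h : IsSolS a r j d) (hdj : 0 ≤ d j) :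
    ∀ i, 1 ≤ i → i ≤ j → 0 ≤ d i := by
  intro i h1 h2
  refine Nat.decreasingInduction' (P := fun k => ∀ i, k ≤ i → i ≤ j → 0 ≤ d i) ?_ (h1.trans h2)
    (fun i hji hij => by rwa [le_antisymm hij hji]) i h1 h2
  intro k hkj hk ih i hki hij
  rcases eq_or_lt_of_le hki with rfl | hki
  · have e := h.row (i := k + 1) (by omega) hkj
    rw [if_pos (by omega), Nat.add_sub_cancel] at e
    have hupper : 0 ≤ if k + 1 < j then a (k + 1) (k + 1 + 1) * d (k + 1 + 1) else 0 := by
      split_ifs with hlt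
      · exact mul_nonneg (hA.sup_nonneg _ (by omega) hlt) (ih _ (by omega) hlt)
      · exact le_rfl
    have hdiag := mul_nonneg (hA.diag_pos (k + 1) (by omega) hkj).le (ih (k + 1) le_rfl hkj)
    have hrhs := hs (k + 1) (by omega) hkj
    refine nonneg_of_mul_nonneg_right ?_ (by simpa using hA.sub_pos (k + 1) (by omega) hkj)
    linarith
  · exact ih i hki hij

lemma eq_zero_of_last_nonneg (h : IsSolS a r j d) (hdj : 0 ≤ d j) :
    ∀ i, 1 ≤ i → i ≤ j → d i = 0 ∧ signedRhs r i = 0 := by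
  have hd := h.nonneg_of_last_nonneg hA hs hdj
  -- a row whose left-hand side vanishes is a vanishing sum of nonnegative terms
  have step : ∀ i, 1 ≤ i → i ≤ j → (if 2 ≤ i then a i (i - 1) * d (i - 1) else 0) = 0 →
      d i = 0 ∧ signedRhs r i = 0 := by
    intro i h1 h2 hlow
    have e := h.row h1 h2
    have hupper : 0 ≤ if i < j then a i (i + 1) * d (i + 1) else 0 := by
      split_ifs with hlt
      · exact mul_nonneg (hA.sup_nonneg i h1 hlt) (hd (i + 1) (by omega) hlt)
      · exact le_rfl
    have hdiag := hA.diag_pos i h1 h2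
    have hdi := mul_nonneg hdiag.le (hd i h1 h2)
    have hrhs := hs i h1 h2
    have hprod : a i i * d i = 0 := by linarith
    exact ⟨(mul_eq_zero.mp hprod).resolve_left hdiag.ne', by linarith⟩
  intro i h1
  induction i, h1 using Nat.le_induction with
  | base => exact fun h2 => step 1 le_rfl h2 (if_neg (by omega))
  | succ i h1 ih =>
    intro h2
    refine step (i + 1) (by omega) h2 ?_
    rw [if_pos (by omega), Nat.add_sub_cancel, (ih (by omega)).1, mul_zero]

lemma last_nonpos (h : IsSolS a r j d) (hj : 1 ≤ j) : d j ≤ 0 := by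
  by_contra! hdj
  have := (h.eq_zero_of_last_nonneg hA hs hdj.le j hj le_rfl).1
  linarith

lemma last_neg (h : IsSolS a r j d) {u : ℕ} (hu1 : 1 ≤ u) (huj : u ≤ j)
    (hsu : 0 < signedRhs r u) : d j < 0 := by
  by_contra! hdj
  have := (h.eq_zero_of_last_nonneg hA hs hdj u hu1 huj).2
  linarith

omit hs in
lemma last_eq_zero (h : IsSolS a r j d) (hj : 1 ≤ j)
    (hs0 : ∀ i, 1 ≤ i → i ≤ j → signedRhs r i = 0) : d j = 0 := by
  have hd := h.last_nonpos hA (fun i h1 h2 => (hs0 i h1 h2).ge) hj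
  have hnd := h.neg.last_nonpos hA (fun i h1 h2 => by simp [signedRhs_neg, hs0 i h1 h2]) hj
  simp only [Pi.neg_apply, neg_nonpos] at hnd
  exact le_antisymm hd hnd

omit hs in
lemma sub_mul_last_pos (h : IsSolS a r j d) (hj : 1 ≤ j)
    (hs : ∀ i, 1 ≤ i → i ≤ j + 1 → 0 ≤ signedRhs r i) {c : ℝ} (hc : 0 < c)
    {u : ℕ} (hu1 : 1 ≤ u) (huj : u ≤ j + 1) (hsu : 0 < signedRhs r u) :
    0 < signedRhs r (j + 1) - c * d j := by
  have hs' i (h1 : 1 ≤ i) (h2 : i ≤ j) := hs i h1 (by omega)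
  have hdj := mul_nonpos_of_nonneg_of_nonpos hc.le (h.last_nonpos hA hs' hj)
  rcases eq_or_lt_of_le huj with rfl | hu
  · linarith
  · have := mul_neg_of_pos_of_neg hc (h.last_neg hA hs' hu1 (by omega) hsu)
    linarith [hs (j + 1) (by omega) le_rfl]

end IsSolS

lemma signedRhs_sub_of_noise {n : ℕ} {a0 σ σ' ta ta' : ℕ → ℝ}
    (hta1 : ta 1 = a0 1 - σ 1 / 2) (htai : ∀ i, 2 ≤ i → i ≤ n → ta i = a0 i + σ i / 2)
    (hta1' : ta' 1 = a0 1 - σ' 1 / 2) (htai' : ∀ i, 2 ≤ i → i ≤ n → ta' i = a0 i + σ' i / 2)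
    {i : ℕ} (h1 : 1 ≤ i) (h2 : i ≤ n) : signedRhs (ta' - ta) i = (σ' i - σ i) / 2 := by
  unfold signedRhs
  split_ifs with hi
  · subst hi
    simp only [Pi.sub_apply, hta1, hta1']
    ring
  · simp only [Pi.sub_apply, htai i (by omega) h2, htai' i (by omega) h2]
    ring

theorem stmt8_general (n : ℕ) (a : ℕ → ℕ → ℝ) (a0 : ℕ → ℝ)
    (ha_diag : ∀ i, 1 ≤ i → i ≤ n → 0 < a i i)
    (ha_sub : ∀ i, 2 ≤ i → i ≤ n → 0 < a i (i - 1))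
    (ha_sup : ∀ i, 1 ≤ i → i ≤ n - 1 → 0 < a i (i + 1))
    (σ σ' : ℕ → ℝ)
    (ta ta' : ℕ → ℝ)
    (hta1 : ta 1 = a0 1 - σ 1 / 2)
    (htai : ∀ i, 2 ≤ i → i ≤ n → ta i = a0 i + σ i / 2)
    (hta1' : ta' 1 = a0 1 - σ' 1 / 2)
    (htai' : ∀ i, 2 ≤ i → i ≤ n → ta' i = a0 i + σ' i / 2)
    (x x' : ℕ → ℕ → ℝ)
    (hx : ∀ j, 1 ≤ j → j ≤ n → IsSolS a ta j (x j))
    (hx' : ∀ j, 1 ≤ j → j ≤ n → IsSolS a ta' j (x' j))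
    (I I' : ℕ → ℝ)
    (hI1 : I 1 = ta 1)
    (hI : ∀ j, 1 ≤ j → j ≤ n - 1 → I (j + 1) = -ta (j + 1) + a (j + 1) j * x j j)
    (hI1' : I' 1 = ta' 1)
    (hI' : ∀ j, 1 ≤ j → j ≤ n - 1 → I' (j + 1) = -ta' (j + 1) + a (j + 1) j * x' j j) :
    ∀ j, 1 ≤ j → j ≤ n →
      (∀ u, 1 ≤ u → u ≤ j →
        (σ u < σ' u ∧ ∀ v, 1 ≤ v → v ≤ n → v ≠ u → σ v = σ' v) → I' j < I j) ∧
      ((∀ v, 1 ≤ v → v ≤ j → σ v = σ' v) → I' j = I j) := by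
  have hs i (h1 : 1 ≤ i) (h2 : i ≤ n) :=
    signedRhs_sub_of_noise hta1 htai hta1' htai' h1 h2
  intro j hj hjn
  obtain rfl | ⟨m, hm, rfl⟩ : j = 1 ∨ ∃ m, 1 ≤ m ∧ j = m + 1 := by
    rcases eq_or_ne j 1 with h | h
    exacts [.inl h, .inr ⟨j - 1, by omega, by omega⟩]
  · refine ⟨fun u hu1 hu ⟨hlt, _⟩ => ?_, fun hσ1 => ?_⟩
    · obtain rfl : u = 1 := by omega
      linarith
    · rw [hI1, hI1', hta1, hta1', hσ1 1 le_rfl le_rfl]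
  have hA : TridiagSignCond a m :=
    ⟨fun i h1 h2 => ha_diag i h1 (by omega), fun i h1 h2 => ha_sub i h1 (by omega),
      fun i h1 h2 => (ha_sup i h1 (by omega)).le⟩
  have hd := (hx m hm (by omega)).sub_s8 (hx' m hm (by omega))
  have hgap : I (m + 1) - I' (m + 1)
      = signedRhs (ta' - ta) (m + 1) - a (m + 1) m * (x' m - x m) m := by
    simp only [hI m hm (by omega), hI' m hm (by omega), signedRhs, if_neg (show m + 1 ≠ 1 by omega),
      Pi.sub_apply]
    ring
  refine ⟨fun u hu1 hu ⟨hlt, hσu⟩ => ?_, fun hσ1 => ?_⟩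
  · have hsnn : ∀ i, 1 ≤ i → i ≤ m + 1 → 0 ≤ signedRhs (ta' - ta) i := by
      intro i h1 h2
      rw [hs i h1 (by omega)]
      rcases eq_or_ne i u with rfl | hiu
      · linarith
      · rw [hσu i h1 (by omega) hiu, sub_self, zero_div]
    have := hd.sub_mul_last_pos hA hm hsnn (by simpa using ha_sub (m + 1) (by omega) hjn) hu1 hu
      (by rw [hs u hu1 (by omega)]; linarith)
    linarith
  · have hs0 i (h1 : 1 ≤ i) (h2 : i ≤ m + 1) : signedRhs (ta' - ta) i = 0 := by
      rw [hs i h1 (by omega), hσ1 i h1 h2, sub_self, zero_div]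
    have hdm : (x' m - x m) m = 0 := hd.last_eq_zero hA hm fun i h1 h2 => hs0 i h1 (by omega)
    rw [hs0 (m + 1) (by omega) le_rfl, hdm] at hgap
    linarith

/-- (Monotonicity of the invasion rates in the noise intensities.)
Set `ã_{10} = a_{10} − σ_1/2` and `ã_{i0} = a_{i0} + σ_i/2` for `2 ≤ i ≤ n`, with
`(σ_1, …, σ_n) ∈ [0,∞)^n`.  Then for every `1 ≤ j ≤ n`, the invasion rate `I_j`,
viewed as a function of `(σ_1, …, σ_n)`, is strictly decreasing in `σ_u` for each
`1 ≤ u ≤ j`, and does not depend on `σ_u` for `u > j` (i.e. it is determined by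
`σ_1, …, σ_j`). -/
theorem stmt8 (n : ℕ) (hn : 1 ≤ n) (a : ℕ → ℕ → ℝ) (a0 : ℕ → ℝ)
    (ha_diag : ∀ i, 1 ≤ i → i ≤ n → 0 < a i i)
    (ha_sub : ∀ i, 2 ≤ i → i ≤ n → 0 < a i (i - 1))
    (ha_sup : ∀ i, 1 ≤ i → i ≤ n - 1 → 0 < a i (i + 1))
    (ha0 : ∀ i, 2 ≤ i → i ≤ n → 0 < a0 i)
    (σ σ' : ℕ → ℝ)
    (hσ : ∀ i, 1 ≤ i → i ≤ n → 0 ≤ σ i)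
    (hσ' : ∀ i, 1 ≤ i → i ≤ n → 0 ≤ σ' i)
    (ta ta' : ℕ → ℝ)
    (hta1 : ta 1 = a0 1 - σ 1 / 2)
    (htai : ∀ i, 2 ≤ i → i ≤ n → ta i = a0 i + σ i / 2)
    (hta1' : ta' 1 = a0 1 - σ' 1 / 2)
    (htai' : ∀ i, 2 ≤ i → i ≤ n → ta' i = a0 i + σ' i / 2)
    (x x' : ℕ → ℕ → ℝ)
    (hx : ∀ j, 1 ≤ j → j ≤ n → IsSolS a ta j (x j))
    (hx' : ∀ j, 1 ≤ j → j ≤ n → IsSolS a ta' j (x' j))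
    (I I' : ℕ → ℝ)
    (hI1 : I 1 = ta 1)
    (hI : ∀ j, 1 ≤ j → j ≤ n - 1 → I (j + 1) = -ta (j + 1) + a (j + 1) j * x j j)
    (hI1' : I' 1 = ta' 1)
    (hI' : ∀ j, 1 ≤ j → j ≤ n - 1 → I' (j + 1) = -ta' (j + 1) + a (j + 1) j * x' j j) :
    ∀ j, 1 ≤ j → j ≤ n →
      (∀ u, 1 ≤ u → u ≤ j →
        (σ u < σ' u ∧ ∀ v, 1 ≤ v → v ≤ n → v ≠ u → σ v = σ' v) → I' j < I j) ∧
      ((∀ v, 1 ≤ v → v ≤ j → σ v = σ' v) → I' j = I j) :=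
  stmt8_general n a a0 ha_diag ha_sub ha_sup σ σ' ta ta' hta1 htai hta1' htai' x x' hx hx' I I' hI1
    hI hI1' hI'
end

section
/- (Trophic cascade on the plant.) The difference between the equilibrium plant density with and without the predator satisfies the identity x_1^{(3)} − x_1^{(2)} = (a_{12}a_{23}/(a_{11}a_{22} + a_{12}a_{21})) · x_3^{(3)}. In particular, x_1^{(3)} − x_1^{(2)} > 0 if x_3^{(3)} > 0, and x_1^{(3)} = x_1^{(2)} if x_3^{(3)} = 0. -/
/-! The differences `x₁ - y₁`, `x₂ - y₂` of the two equilibria satisfy the homogeneous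
system `a₁₁ u + a₁₂ v = 0`, `a₂₁ u - a₂₂ v = a₂₃ x₃`; eliminating `v` gives
`(a₁₁ a₂₂ + a₁₂ a₂₁) u = a₁₂ a₂₃ x₃`, and the determinant is positive. -/

theorem det_mul_sub_eq_of_two_systems {R : Type*} [CommRing R]
    {a11 a12 a21 a22 a23 b1 b2 y1 y2 x1 x2 x3 : R}
    (hy1 : -a11 * y1 - a12 * y2 = -b1) (hy2 : a21 * y1 - a22 * y2 = b2)
    (hx1 : -a11 * x1 - a12 * x2 = -b1) (hx2 : a21 * x1 - a22 * x2 - a23 * x3 = b2) :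
    (a11 * a22 + a12 * a21) * (x1 - y1) = a12 * a23 * x3 := by
  linear_combination (-a22) * hx1 + a22 * hy1 + a12 * hx2 - a12 * hy2

theorem stmt12_general (a11 a22 a21 a12 a23 : ℝ)
    (h11 : 0 < a11) (h22 : 0 < a22)
    (h21 : 0 < a21) (h12 : 0 < a12) (h23 : 0 < a23)
    (ta10 ta20 : ℝ)
    (y1 y2 : ℝ)
    (hy1 : -a11 * y1 - a12 * y2 = -ta10)
    (hy2 : a21 * y1 - a22 * y2 = ta20)
    (x1 x2 x3 : ℝ)
    (hx1 : -a11 * x1 - a12 * x2 = -ta10)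
    (hx2 : a21 * x1 - a22 * x2 - a23 * x3 = ta20) :
    x1 - y1 = (a12 * a23 / (a11 * a22 + a12 * a21)) * x3 ∧
    (0 < x3 → 0 < x1 - y1) ∧
    (x3 = 0 → x1 = y1) := by
  have hdet : 0 < a11 * a22 + a12 * a21 := by positivity
  have hshift : x1 - y1 = (a12 * a23 / (a11 * a22 + a12 * a21)) * x3 := by
    rw [div_mul_eq_mul_div, eq_div_iff hdet.ne', mul_comm]
    exact det_mul_sub_eq_of_two_systems hy1 hy2 hx1 hx2
  refine ⟨hshift, fun hx3 => ?_, fun hx3 => ?_⟩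
  · rw [hshift]
    positivity
  · rw [← sub_eq_zero, hshift, hx3, mul_zero]

/-- (Trophic cascade on the plant.)  With `(x_1^{(2)}, x_2^{(2)})` the unique
solution of `(S_2)` and `(x_1^{(3)}, x_2^{(3)}, x_3^{(3)})` the unique solution of
`(S_3)`, one has
`x_1^{(3)} − x_1^{(2)} = (a_{12}a_{23}/(a_{11}a_{22} + a_{12}a_{21})) · x_3^{(3)}`;
in particular `x_1^{(3)} − x_1^{(2)} > 0` if `x_3^{(3)} > 0`, and
`x_1^{(3)} = x_1^{(2)}` if `x_3^{(3)} = 0`. -/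
theorem stmt12 (a11 a22 a33 a21 a32 a12 a23 : ℝ)
    (h11 : 0 < a11) (h22 : 0 < a22) (h33 : 0 < a33)
    (h21 : 0 < a21) (h32 : 0 < a32) (h12 : 0 < a12) (h23 : 0 < a23)
    (ta10 ta20 ta30 : ℝ) (h20 : 0 < ta20) (h30 : 0 < ta30)
    (y1 y2 : ℝ)
    (hy1 : -a11 * y1 - a12 * y2 = -ta10)
    (hy2 : a21 * y1 - a22 * y2 = ta20)
    (x1 x2 x3 : ℝ)
    (hx1 : -a11 * x1 - a12 * x2 = -ta10)
    (hx2 : a21 * x1 - a22 * x2 - a23 * x3 = ta20)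
    (hx3 : a32 * x2 - a33 * x3 = ta30) :
    x1 - y1 = (a12 * a23 / (a11 * a22 + a12 * a21)) * x3 ∧
    (0 < x3 → 0 < x1 - y1) ∧
    (x3 = 0 → x1 = y1) :=
  stmt12_general a11 a22 a21 a12 a23 h11 h22 h21 h12 h23 ta10 ta20 y1 y2 hy1 hy2 x1 x2 x3 hx1 hx2
end

section
/- (Trophic cascade on the herbivore.) The difference between the equilibrium herbivore density with and without the predator satisfies the identity x_2^{(3)} − x_2^{(2)} = −(a_{11}a_{23}/(a_{11}a_{22} + a_{12}a_{21})) · x_3^{(3)}. In particular, x_2^{(3)} − x_2^{(2)} < 0 if x_3^{(3)} > 0, and x_2^{(3)} = x_2^{(2)} if x_3^{(3)} = 0. -/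
/-!
Subtracting `(S_2)` from the first two equations of `(S_3)` shows that the displacement
`(x_1^{(3)} − x_1^{(2)}, x_2^{(3)} − x_2^{(2)})` solves the 2 × 2 system of `(S_2)` with right-hand
side `(0, a_{23} x_3^{(3)})`; Cramer's rule, with determinant `a_{11}a_{22} + a_{12}a_{21} > 0`,
gives the herbivore shift.
-/

theorem herbivore_sub_mul_det_eq {K : Type*} [Field K]
    {a11 a12 a21 a22 a23 ta10 ta20 y1 y2 x1 x2 x3 : K}
    (hy1 : -a11 * y1 - a12 * y2 = -ta10) (hy2 : a21 * y1 - a22 * y2 = ta20)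
    (hx1 : -a11 * x1 - a12 * x2 = -ta10) (hx2 : a21 * x1 - a22 * x2 - a23 * x3 = ta20) :
    (x2 - y2) * (a11 * a22 + a12 * a21) = -(a11 * a23) * x3 := by
  linear_combination (-a21) * hx1 + a21 * hy1 - a11 * hx2 + a11 * hy2

theorem herbivore_sub_eq {K : Type*} [Field K]
    {a11 a12 a21 a22 a23 ta10 ta20 y1 y2 x1 x2 x3 : K}
    (hy1 : -a11 * y1 - a12 * y2 = -ta10) (hy2 : a21 * y1 - a22 * y2 = ta20)
    (hx1 : -a11 * x1 - a12 * x2 = -ta10) (hx2 : a21 * x1 - a22 * x2 - a23 * x3 = ta20)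
    (hdet : a11 * a22 + a12 * a21 ≠ 0) :
    x2 - y2 = -(a11 * a23 / (a11 * a22 + a12 * a21)) * x3 := by
  rw [neg_mul, div_mul_eq_mul_div, ← neg_div, eq_div_iff hdet, ← neg_mul]
  exact herbivore_sub_mul_det_eq hy1 hy2 hx1 hx2

theorem stmt13_general (a11 a22 a21 a12 a23 : ℝ)
    (h11 : 0 < a11) (h22 : 0 < a22)
    (h21 : 0 < a21) (h12 : 0 < a12) (h23 : 0 < a23)
    (ta10 ta20 : ℝ)
    (y1 y2 : ℝ)
    (hy1 : -a11 * y1 - a12 * y2 = -ta10)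
    (hy2 : a21 * y1 - a22 * y2 = ta20)
    (x1 x2 x3 : ℝ)
    (hx1 : -a11 * x1 - a12 * x2 = -ta10)
    (hx2 : a21 * x1 - a22 * x2 - a23 * x3 = ta20) :
    x2 - y2 = -(a11 * a23 / (a11 * a22 + a12 * a21)) * x3 ∧
    (0 < x3 → x2 - y2 < 0) ∧
    (x3 = 0 → x2 = y2) := by
  have hdet : 0 < a11 * a22 + a12 * a21 := by positivity
  have hshift := herbivore_sub_eq hy1 hy2 hx1 hx2 hdet.ne'
  have hcoef : 0 < a11 * a23 / (a11 * a22 + a12 * a21) := by positivity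
  refine ⟨hshift, fun hx3 => ?_, fun hx3 => ?_⟩
  · rw [hshift, neg_mul]
    exact neg_neg_of_pos (mul_pos hcoef hx3)
  · rw [← sub_eq_zero, hshift, hx3, mul_zero]

/-- (Trophic cascade on the herbivore.)  With `(x_1^{(2)}, x_2^{(2)})` the unique
solution of `(S_2)` and `(x_1^{(3)}, x_2^{(3)}, x_3^{(3)})` the unique solution of
`(S_3)`, one has
`x_2^{(3)} − x_2^{(2)} = −(a_{11}a_{23}/(a_{11}a_{22} + a_{12}a_{21})) · x_3^{(3)}`;
in particular `x_2^{(3)} − x_2^{(2)} < 0` if `x_3^{(3)} > 0`, and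
`x_2^{(3)} = x_2^{(2)}` if `x_3^{(3)} = 0`. -/
theorem stmt13 (a11 a22 a33 a21 a32 a12 a23 : ℝ)
    (h11 : 0 < a11) (h22 : 0 < a22) (h33 : 0 < a33)
    (h21 : 0 < a21) (h32 : 0 < a32) (h12 : 0 < a12) (h23 : 0 < a23)
    (ta10 ta20 ta30 : ℝ) (h20 : 0 < ta20) (h30 : 0 < ta30)
    (y1 y2 : ℝ)
    (hy1 : -a11 * y1 - a12 * y2 = -ta10)
    (hy2 : a21 * y1 - a22 * y2 = ta20)
    (x1 x2 x3 : ℝ)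
    (hx1 : -a11 * x1 - a12 * x2 = -ta10)
    (hx2 : a21 * x1 - a22 * x2 - a23 * x3 = ta20)
    (hx3 : a32 * x2 - a33 * x3 = ta30) :
    x2 - y2 = -(a11 * a23 / (a11 * a22 + a12 * a21)) * x3 ∧
    (0 < x3 → x2 - y2 < 0) ∧
    (x3 = 0 → x2 = y2) :=
  stmt13_general a11 a22 a21 a12 a23 h11 h22 h21 h12 h23 ta10 ta20 y1 y2 hy1 hy2 x1 x2 x3 hx1 hx2
end

section
/- Viewing the equilibrium plant density x_1^{(3)} as a function of the predator's stochastic death rate ã_{30} ∈ ℝ (all other coefficients being held fixed), x_1^{(3)} is strictly decreasing in ã_{30}: if ã_{30} < ã'_{30}, then the corresponding solutions satisfy x_1^{(3)}(ã_{30}) > x_1^{(3)}(ã'_{30}). -/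
/-! The increments of two solutions of `(S_3)` whose right-hand sides differ only in the last
entry by `δ` solve `(S_3)` with right-hand side `(0, 0, δ)`; eliminating `x_2` and `x_3` gives
`Δx_1 · D = -a_{12} a_{23} δ`, where `D` (minus the determinant of the system) is a sum of
products of positive coefficients. -/

theorem s3_fst_mul_neg_det_eq {R : Type*} [CommRing R] {a11 a12 a21 a22 a23 a32 a33 d1 d2 d3 δ : R}
    (h1 : -a11 * d1 - a12 * d2 = 0) (h2 : a21 * d1 - a22 * d2 - a23 * d3 = 0)
    (h3 : a32 * d2 - a33 * d3 = δ) :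
    d1 * (a11 * a22 * a33 + a11 * a23 * a32 + a12 * a21 * a33) = -(a12 * a23 * δ) := by
  linear_combination -(a22 * a33 + a23 * a32) * h1 + a12 * a33 * h2 - a12 * a23 * h3

/-- Viewing the equilibrium plant density `x_1^{(3)}` as a function of the
predator's stochastic death rate `ã_{30} ∈ ℝ` (all other coefficients held fixed),
`x_1^{(3)}` is strictly decreasing in `ã_{30}`: if `ã_{30} < ã'_{30}`, then the
corresponding solutions of `(S_3)` satisfy `x_1^{(3)}(ã_{30}) > x_1^{(3)}(ã'_{30})`. -/
theorem stmt14 (a11 a22 a33 a21 a32 a12 a23 : ℝ)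
    (h11 : 0 < a11) (h22 : 0 < a22) (h33 : 0 < a33)
    (h21 : 0 < a21) (h32 : 0 < a32) (h12 : 0 < a12) (h23 : 0 < a23)
    (ta10 ta20 : ℝ)
    (ta30 ta30' : ℝ) (h3 : ta30 < ta30')
    (x1 x2 x3 : ℝ)
    (hx1 : -a11 * x1 - a12 * x2 = -ta10)
    (hx2 : a21 * x1 - a22 * x2 - a23 * x3 = ta20)
    (hx3 : a32 * x2 - a33 * x3 = ta30)
    (x1' x2' x3' : ℝ)
    (hx1' : -a11 * x1' - a12 * x2' = -ta10)
    (hx2' : a21 * x1' - a22 * x2' - a23 * x3' = ta20)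
    (hx3' : a32 * x2' - a33 * x3' = ta30') :
    x1' < x1 := by
  have hD : 0 < a11 * a22 * a33 + a11 * a23 * a32 + a12 * a21 * a33 := by positivity
  have hrhs : 0 < a12 * a23 * (ta30' - ta30) := by have := sub_pos.2 h3; positivity
  have hd1 : -a11 * (x1' - x1) - a12 * (x2' - x2) = 0 := by linear_combination hx1' - hx1
  have hd2 : a21 * (x1' - x1) - a22 * (x2' - x2) - a23 * (x3' - x3) = 0 := by
    linear_combination hx2' - hx2
  have hd3 : a32 * (x2' - x2) - a33 * (x3' - x3) = ta30' - ta30 := by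
    linear_combination hx3' - hx3
  have key := s3_fst_mul_neg_det_eq hd1 hd2 hd3
  have hneg : (x1' - x1) * (a11 * a22 * a33 + a11 * a23 * a32 + a12 * a21 * a33) < 0 := by
    rw [key]; exact neg_neg_of_pos hrhs
  exact sub_neg.1 (neg_of_mul_neg_left hneg hD.le)
end

section
/- (Lemma: the support of a boundary equilibrium measure has no gaps.) Let μ be a Borel probability measure on [0,∞)^n with finite first moments, and let I ⊆ {1,…,n} be a nonempty set such that μ-almost every x = (x_1,…,x_n) satisfies x_i > 0 for all i ∈ I and x_i = 0 for all i ∉ I. If λ_i(μ) = 0 for every i ∈ I, then I = {1, 2, …, l} where l is the cardinality of I. -/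
/-!
If `i ∈ I` with `i ≥ 2` but `i - 1 ∉ I`, then the coordinate `x_{i-1}` vanishes `μ`-a.e., so the
only positive contribution `a_{i,i-1} x_{i-1}` to the per-capita growth rate of species `i` drops
out and `λ_i(μ) ≤ -ã_{i0} < 0`. Hence `I` is closed under `i ↦ i - 1`, i.e. an initial segment.
-/

open MeasureTheory

/-- The `i`-th Lyapunov exponent `λ_i(μ)` of a (probability) measure `μ` on the
state space: `λ_1(μ) = ∫ (ã_{10} − a_{11}x_1 − a_{12}x_2) dμ`,
`λ_i(μ) = ∫ (−ã_{i0} + a_{i,i−1}x_{i−1} − a_{ii}x_i − a_{i,i+1}x_{i+1}) dμ` for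
`2 ≤ i ≤ n−1`, and `λ_n(μ) = ∫ (−ã_{n0} + a_{n,n−1}x_{n−1} − a_{nn}x_n) dμ`. -/
noncomputable def lam (n : ℕ) (a : ℕ → ℕ → ℝ) (ta : ℕ → ℝ)
    (μ : Measure (ℕ → ℝ)) (i : ℕ) : ℝ :=
  if i = 1 then ∫ x, (ta 1 - a 1 1 * x 1 - a 1 2 * x 2) ∂μ
  else if i = n then ∫ x, (-ta n + a n (n - 1) * x (n - 1) - a n n * x n) ∂μ
  else ∫ x, (-ta i + a i (i - 1) * x (i - 1) - a i i * x i - a i (i + 1) * x (i + 1)) ∂μ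

open Finset

theorem Finset.eq_Icc_one_card_of_pred_mem {I : Finset ℕ} (h0 : 0 ∉ I)
    (hpred : ∀ i ∈ I, 2 ≤ i → i - 1 ∈ I) : I = Icc 1 #I := by
  have hpos : ∀ i ∈ I, 1 ≤ i := fun i hi => Nat.one_le_iff_ne_zero.mpr fun h => h0 (h ▸ hi)
  have hdown : ∀ i ∈ I, ∀ j, 1 ≤ j → j ≤ i → j ∈ I := by
    intro i hi j hj hji
    refine Nat.decreasingInduction (motive := fun k _ => 1 ≤ k → k ∈ I)
      (fun k _ hsucc hk => ?_) (fun _ => hi) hji hj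
    simpa using hpred (k + 1) (hsucc (by omega)) (by omega)
  have hI : I = Icc 1 (I.sup id) := by
    ext j
    refine ⟨fun hj => mem_Icc.mpr ⟨hpos j hj, le_sup (f := id) hj⟩, fun hj => ?_⟩
    obtain ⟨hj1, hjM⟩ := mem_Icc.mp hj
    obtain ⟨i, hi, hiM⟩ := I.exists_mem_eq_sup
      (nonempty_iff_ne_empty.mpr fun h => by simp [h] at hjM; omega) id
    exact hdown i hi j hj1 (by simpa [hiM] using hjM)
  rw [hI, Nat.card_Icc, Nat.add_sub_cancel]

section Lyapunov

variable {n : ℕ} {a : ℕ → ℕ → ℝ} {ta : ℕ → ℝ} {μ : Measure (ℕ → ℝ)} [IsProbabilityMeasure μ]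
  {i : ℕ}

theorem lam_eq_of_lt (h2 : 2 ≤ i) (hin : i < n)
    (hpred : Integrable (fun x : ℕ → ℝ => x (i - 1)) μ)
    (hself : Integrable (fun x : ℕ → ℝ => x i) μ)
    (hsucc : Integrable (fun x : ℕ → ℝ => x (i + 1)) μ) :
    lam n a ta μ i = -ta i + a i (i - 1) * ∫ x, x (i - 1) ∂μ - a i i * ∫ x, x i ∂μ
      - a i (i + 1) * ∫ x, x (i + 1) ∂μ := by
  rw [lam, if_neg (by omega), if_neg (by omega),
    integral_sub (((integrable_const _).fun_add (hpred.const_mul _)).sub' (hself.const_mul _))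
      (hsucc.const_mul _),
    integral_sub ((integrable_const _).fun_add (hpred.const_mul _)) (hself.const_mul _),
    integral_add (integrable_const _) (hpred.const_mul _),
    integral_const_mul, integral_const_mul, integral_const_mul]
  simp

theorem lam_self_eq (h2 : 2 ≤ n)
    (hpred : Integrable (fun x : ℕ → ℝ => x (n - 1)) μ)
    (hself : Integrable (fun x : ℕ → ℝ => x n) μ) :
    lam n a ta μ n = -ta n + a n (n - 1) * ∫ x, x (n - 1) ∂μ - a n n * ∫ x, x n ∂μ := by
  rw [lam, if_neg (by omega), if_pos rfl,
    integral_sub ((integrable_const _).fun_add (hpred.const_mul _)) (hself.const_mul _),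
    integral_add (integrable_const _) (hpred.const_mul _),
    integral_const_mul, integral_const_mul]
  simp

theorem lam_neg_of_integral_pred_eq_zero (h2 : 2 ≤ i) (hin : i ≤ n) (hta : 0 < ta i)
    (hdiag : 0 ≤ a i i) (hsup : i < n → 0 ≤ a i (i + 1))
    (hint : ∀ j, 1 ≤ j → j ≤ n → Integrable (fun x : ℕ → ℝ => x j) μ)
    (hnonneg : ∀ j, 1 ≤ j → j ≤ n → 0 ≤ ∫ x, x j ∂μ)
    (hpred : ∫ x, x (i - 1) ∂μ = 0) :
    lam n a ta μ i < 0 := by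
  have hself := mul_nonneg hdiag (hnonneg i (by omega) hin)
  rcases hin.lt_or_eq with hlt | rfl
  · have hsucc := mul_nonneg (hsup hlt) (hnonneg (i + 1) (by omega) hlt)
    rw [lam_eq_of_lt h2 hlt (hint _ (by omega) (by omega)) (hint _ (by omega) hlt.le)
      (hint _ (by omega) hlt), hpred]
    linarith
  · rw [lam_self_eq h2 (hint _ (by omega) (by omega)) (hint _ (by omega) le_rfl), hpred]
    linarith

end Lyapunov

theorem stmt15_general (n : ℕ) (a : ℕ → ℕ → ℝ) (ta : ℕ → ℝ)
    (ha_diag : ∀ i, 1 ≤ i → i ≤ n → 0 < a i i)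
    (ha_sup : ∀ i, 1 ≤ i → i ≤ n - 1 → 0 < a i (i + 1))
    (hta : ∀ i, 2 ≤ i → i ≤ n → 0 < ta i)
    (μ : Measure (ℕ → ℝ)) [IsProbabilityMeasure μ]
    (hint : ∀ i, 1 ≤ i → i ≤ n → Integrable (fun x : ℕ → ℝ => x i) μ)
    (I : Finset ℕ) (hIsub : I ⊆ Finset.Icc 1 n)
    (hsupp : ∀ᵐ x ∂μ, ∀ i, 1 ≤ i → i ≤ n →
      (i ∈ I → 0 < x i) ∧ (i ∉ I → x i = 0))
    (hlam : ∀ i ∈ I, lam n a ta μ i = 0) :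
    I = Finset.Icc 1 I.card := by
  refine eq_Icc_one_card_of_pred_mem (fun h0 => by simpa using hIsub h0) fun i hi h2 => ?_
  have hin : i ≤ n := (mem_Icc.mp (hIsub hi)).2
  have hnonneg : ∀ j, 1 ≤ j → j ≤ n → 0 ≤ ∫ x, x j ∂μ := fun j hj1 hjn =>
    integral_nonneg_of_ae <| hsupp.mono fun x hx => by
      by_cases hj : j ∈ I
      · exact ((hx j hj1 hjn).1 hj).le
      · exact ((hx j hj1 hjn).2 hj).ge
  by_contra hpred
  have hzero : ∫ x, x (i - 1) ∂μ = 0 :=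
    integral_eq_zero_of_ae <| hsupp.mono fun x hx => (hx (i - 1) (by omega) (by omega)).2 hpred
  exact (lam_neg_of_integral_pred_eq_zero h2 hin (hta i h2 hin) (ha_diag i (by omega) hin).le
    (fun hlt => (ha_sup i (by omega) (by omega)).le) hint hnonneg hzero).ne (hlam i hi)

/-- (Lemma: the support of a boundary equilibrium measure has no gaps.)
Let `μ` be a Borel probability measure on `[0,∞)^n` with finite first moments and
let `I ⊆ {1,…,n}` be a nonempty set such that `μ`-a.e. `x` satisfies `x_i > 0` for
`i ∈ I` and `x_i = 0` for `i ∉ I`.  If `λ_i(μ) = 0` for every `i ∈ I`, then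
`I = {1, 2, …, l}` where `l` is the cardinality of `I`. -/
theorem stmt15 (n : ℕ) (hn : 2 ≤ n) (a : ℕ → ℕ → ℝ) (ta : ℕ → ℝ)
    (ha_diag : ∀ i, 1 ≤ i → i ≤ n → 0 < a i i)
    (ha_sub : ∀ i, 2 ≤ i → i ≤ n → 0 < a i (i - 1))
    (ha_sup : ∀ i, 1 ≤ i → i ≤ n - 1 → 0 < a i (i + 1))
    (hta : ∀ i, 2 ≤ i → i ≤ n → 0 < ta i)
    (μ : Measure (ℕ → ℝ)) [IsProbabilityMeasure μ]
    (hint : ∀ i, 1 ≤ i → i ≤ n → Integrable (fun x : ℕ → ℝ => x i) μ)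
    (I : Finset ℕ) (hIne : I.Nonempty) (hIsub : I ⊆ Finset.Icc 1 n)
    (hsupp : ∀ᵐ x ∂μ, ∀ i, 1 ≤ i → i ≤ n →
      (i ∈ I → 0 < x i) ∧ (i ∉ I → x i = 0))
    (hlam : ∀ i ∈ I, lam n a ta μ i = 0) :
    I = Finset.Icc 1 I.card :=
  stmt15_general n a ta ha_diag ha_sup hta μ hint I hIsub hsupp hlam
end

section
/- (Lemma, second claim.) If I_n ≤ 0, then there is no Borel probability measure μ on [0,∞)^n with finite first moments such that μ-almost every x has all coordinates strictly positive and λ_i(μ) = 0 for every i = 1,…,n. Equivalently, the existence of such a measure μ implies I_n > 0. -/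
open MeasureTheory

/-!
Let `m k = ∫ x k ∂μ`. The conditions `λ_i(μ) = 0` for `i < n` say that `m` solves rows
`1, …, n-1` of the tridiagonal system, and so does the solution `x` of `(S_{n-1})` once it is
extended by `x_n = 0`. The difference `d` of the two solves the homogeneous rows, with
`d_n = -m_n < 0`, and `I_n ≤ 0` together with `λ_n(μ) = 0` gives `d_{n-1} < 0`. Because the
coefficients are positive, a row `a_{i,i-1} d_{i-1} = a_{ii} d_i + a_{i,i+1} d_{i+1}` carries
negativity one step to the left, so `d_1, d_2 < 0`, contradicting row `1`:
`-a_{11} d_1 - a_{12} d_2 = 0`.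
-/

theorem integral_pos_of_ae_pos {α : Type*} [MeasurableSpace α] {μ : Measure α} [NeZero μ]
    {f : α → ℝ} (hf : Integrable f μ) (hpos : ∀ᵐ x ∂μ, 0 < f x) : 0 < ∫ x, f x ∂μ := by
  rw [integral_pos_iff_support_of_nonneg_ae (hpos.mono fun _ h => h.le) hf, pos_iff_ne_zero]
  intro h0
  obtain ⟨x, hx, hx0⟩ := (hpos.and (measure_eq_zero_iff_ae_notMem.mp h0)).exists
  exact hx0 hx.ne'

def tridiagRow (a : ℕ → ℕ → ℝ) (y : ℕ → ℝ) (i : ℕ) : ℝ :=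
  (if 2 ≤ i then a i (i - 1) * y (i - 1) else 0) - a i i * y i - a i (i + 1) * y (i + 1)

section tridiagRow

variable {a : ℕ → ℕ → ℝ}

theorem tridiagRow_sub (y z : ℕ → ℝ) (i : ℕ) :
    tridiagRow a (y - z) i = tridiagRow a y i - tridiagRow a z i := by
  unfold tridiagRow
  split_ifs <;> simp only [Pi.sub_apply] <;> ring

theorem tridiagRow_one_pos {d : ℕ → ℝ} (h11 : 0 < a 1 1) (h12 : 0 ≤ a 1 2)
    (hd1 : d 1 < 0) (hd2 : d 2 ≤ 0) : 0 < tridiagRow a d 1 := by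
  simp only [tridiagRow, if_neg (by norm_num : ¬ 2 ≤ 1)]
  nlinarith [mul_nonneg h12 (neg_nonneg.mpr hd2)]

theorem tridiagRow_sub_one_neg {d : ℕ → ℝ} {i : ℕ} (hi : 2 ≤ i) (hsub : 0 < a i (i - 1))
    (hdiag : 0 < a i i) (hsup : 0 ≤ a i (i + 1)) (hrow : tridiagRow a d i = 0)
    (hd : d i < 0) (hd' : d (i + 1) ≤ 0) : d (i - 1) < 0 := by
  simp only [tridiagRow, if_pos hi] at hrow
  nlinarith [mul_nonneg hsup (neg_nonneg.mpr hd')]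

theorem neg_of_tridiagRow_eq_zero {d : ℕ → ℝ} {N : ℕ}
    (hsub : ∀ i, 2 ≤ i → i ≤ N → 0 < a i (i - 1)) (hdiag : ∀ i, 2 ≤ i → i ≤ N → 0 < a i i)
    (hsup : ∀ i, 2 ≤ i → i ≤ N → 0 ≤ a i (i + 1)) (hrow : ∀ i, 2 ≤ i → i ≤ N → tridiagRow a d i = 0)
    (hN : d N < 0) (hN' : d (N + 1) ≤ 0) {k : ℕ} (hk : 1 ≤ k) (hkN : k ≤ N) :
    d k < 0 ∧ d (k + 1) ≤ 0 := by
  induction hkN using Nat.decreasingInduction with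
  | self => exact ⟨hN, hN'⟩
  | of_succ k hkN ih =>
    obtain ⟨hd, hd'⟩ := ih (by omega)
    refine ⟨?_, hd.le⟩
    simpa using tridiagRow_sub_one_neg (i := k + 1) (by omega) (hsub _ (by omega) hkN)
      (hdiag _ (by omega) hkN) (hsup _ (by omega) hkN) (hrow _ (by omega) hkN) hd hd'

end tridiagRow

theorem IsSolS.tridiagRow_extend {a : ℕ → ℕ → ℝ} {ta : ℕ → ℝ} {j : ℕ} {x : ℕ → ℝ}
    (hx : IsSolS a ta j x) {i : ℕ} (hi : 1 ≤ i) (hij : i ≤ j) :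
    tridiagRow a (fun k => if k ≤ j then x k else 0) i = if i = 1 then -ta 1 else ta i := by
  rw [← hx i hi hij, tridiagRow]
  split_ifs <;> first | omega | ring

section lam

variable {n : ℕ} {a : ℕ → ℕ → ℝ} {ta : ℕ → ℝ} {μ : Measure (ℕ → ℝ)} [IsProbabilityMeasure μ]

theorem lam_eq_tridiagRow_sub {i : ℕ} (hi : 1 ≤ i) (hin : i < n)
    (hint : ∀ k, 1 ≤ k → k ≤ n → Integrable (fun x : ℕ → ℝ => x k) μ) :
    lam n a ta μ i = tridiagRow a (fun k => ∫ x, x k ∂μ) i - (if i = 1 then -ta 1 else ta i) := by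
  obtain rfl | hi2 := hi.eq_or_lt
  · have h1 := (hint 1 le_rfl (by omega)).const_mul (a 1 1)
    have h2 := (hint 2 (by omega) (by omega)).const_mul (a 1 2)
    rw [lam, if_pos rfl, tridiagRow, if_neg (by omega), integral_sub, integral_sub, integral_const,
      integral_const_mul, integral_const_mul]
    · simp only [probReal_univ, smul_eq_mul, one_mul, ↓reduceIte]
      ring
    all_goals fun_prop
  · have h1 := (hint (i - 1) (by omega) (by omega)).const_mul (a i (i - 1))
    have h2 := (hint i hi hin.le).const_mul (a i i)
    have h3 := (hint (i + 1) (by omega) hin).const_mul (a i (i + 1))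
    rw [lam, if_neg (by omega), if_neg (by omega), tridiagRow, if_pos (show 2 ≤ i from hi2), if_neg (by omega),
      integral_sub, integral_sub, integral_add, integral_const, integral_const_mul,
      integral_const_mul, integral_const_mul]
    · simp only [probReal_univ, smul_eq_mul, one_mul]
      ring
    all_goals fun_prop

theorem lam_last (hn : 2 ≤ n)
    (hint : ∀ k, 1 ≤ k → k ≤ n → Integrable (fun x : ℕ → ℝ => x k) μ) :
    lam n a ta μ n = -ta n + a n (n - 1) * ∫ x, x (n - 1) ∂μ - a n n * ∫ x, x n ∂μ := by
  have h1 := (hint (n - 1) (by omega) (by omega)).const_mul (a n (n - 1))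
  have h2 := (hint n (by omega) le_rfl).const_mul (a n n)
  rw [lam, if_neg (by omega), if_pos rfl, integral_sub, integral_add, integral_const,
    integral_const_mul, integral_const_mul] <;> first | fun_prop | simp

end lam

theorem stmt17_general (n : ℕ) (hn : 2 ≤ n) (a : ℕ → ℕ → ℝ) (ta : ℕ → ℝ)
    (ha_diag : ∀ i, 1 ≤ i → i ≤ n → 0 < a i i)
    (ha_sub : ∀ i, 2 ≤ i → i ≤ n → 0 < a i (i - 1))
    (ha_sup : ∀ i, 1 ≤ i → i ≤ n - 1 → 0 < a i (i + 1))
    (x : ℕ → ℝ) (hx : IsSolS a ta (n - 1) x)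
    (In : ℝ) (hIn : In = -ta n + a n (n - 1) * x (n - 1))
    (hle : In ≤ 0) :
    ¬ ∃ μ : Measure (ℕ → ℝ), IsProbabilityMeasure μ ∧
      (∀ i, 1 ≤ i → i ≤ n → Integrable (fun x : ℕ → ℝ => x i) μ) ∧
      (∀ᵐ x ∂μ, ∀ i, 1 ≤ i → i ≤ n → 0 < x i) ∧
      (∀ i, 1 ≤ i → i ≤ n → lam n a ta μ i = 0) := by
  rintro ⟨μ, hμ, hint, hpos, hlam⟩
  set m : ℕ → ℝ := fun k => ∫ y, y k ∂μ
  set d : ℕ → ℝ := (fun k => if k ≤ n - 1 then x k else 0) - m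
  have hmn : 0 < m n := integral_pos_of_ae_pos (hint n (by omega) le_rfl)
    (hpos.mono fun y hy => hy n (by omega) le_rfl)
  have hrow : ∀ i, 1 ≤ i → i ≤ n - 1 → tridiagRow a d i = 0 := fun i hi hin => by
    have := lam_eq_tridiagRow_sub (a := a) (ta := ta) hi (by omega) hint
    rw [tridiagRow_sub, hx.tridiagRow_extend hi hin]
    linarith [hlam i hi (by omega)]
  have hd_last : d (n - 1) < 0 := by
    have hlam_n := lam_last (a := a) (ta := ta) hn hint
    rw [hlam n (by omega) le_rfl] at hlam_n
    have : a n (n - 1) * d (n - 1) < 0 := by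
      simp only [d, Pi.sub_apply, le_rfl, if_true, mul_sub]
      linarith [mul_pos (ha_diag n (by omega) le_rfl) hmn]
    exact neg_of_mul_neg_right this (ha_sub n hn le_rfl).le
  have hd_n : d n < 0 := by simp [d, show ¬ n ≤ n - 1 by omega, hmn]
  obtain ⟨hd1, hd2⟩ := neg_of_tridiagRow_eq_zero (N := n - 1)
    (fun i hi hin => ha_sub i hi (by omega)) (fun i hi hin => ha_diag i (by omega) (by omega))
    (fun i hi hin => (ha_sup i (by omega) hin).le) (fun i hi hin => hrow i (by omega) hin)
    hd_last (by rw [Nat.sub_add_cancel (by omega)]; exact hd_n.le) le_rfl (by omega)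
  exact (tridiagRow_one_pos (ha_diag 1 le_rfl (by omega)) (ha_sup 1 le_rfl (by omega)).le
    hd1 hd2).ne' (hrow 1 le_rfl (by omega))

/-- (Lemma, second claim.)  If `I_n ≤ 0` (where `I_n = −ã_{n0} + a_{n,n−1} x_{n−1}^{(n−1)}`
and `x^{(n−1)}` is the unique solution of `(S_{n−1})`), then there is no Borel
probability measure `μ` on `[0,∞)^n` with finite first moments such that `μ`-a.e.
`x` has all coordinates strictly positive and `λ_i(μ) = 0` for every `i = 1,…,n`. -/
theorem stmt17 (n : ℕ) (hn : 2 ≤ n) (a : ℕ → ℕ → ℝ) (ta : ℕ → ℝ)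
    (ha_diag : ∀ i, 1 ≤ i → i ≤ n → 0 < a i i)
    (ha_sub : ∀ i, 2 ≤ i → i ≤ n → 0 < a i (i - 1))
    (ha_sup : ∀ i, 1 ≤ i → i ≤ n - 1 → 0 < a i (i + 1))
    (hta : ∀ i, 2 ≤ i → i ≤ n → 0 < ta i)
    (x : ℕ → ℝ) (hx : IsSolS a ta (n - 1) x)
    (In : ℝ) (hIn : In = -ta n + a n (n - 1) * x (n - 1))
    (hle : In ≤ 0) :
    ¬ ∃ μ : Measure (ℕ → ℝ), IsProbabilityMeasure μ ∧
      (∀ i, 1 ≤ i → i ≤ n → Integrable (fun x : ℕ → ℝ => x i) μ) ∧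
      (∀ᵐ x ∂μ, ∀ i, 1 ≤ i → i ≤ n → 0 < x i) ∧
      (∀ i, 1 ≤ i → i ≤ n → lam n a ta μ i = 0) :=
  stmt17_general n hn a ta ha_diag ha_sub ha_sup x hx In hIn hle
end

section
/- (Last row of the inverse of a constant-coefficient tridiagonal matrix.) Let α, β > 0 and n ≥ 1, and let r_1 ≠ r_2 be the two (real, distinct) roots of the quadratic equation β − rα − r²β = 0, namely r_{1,2} = (−α ± √(α² + 4β²))/(2β). Let A be the n×n tridiagonal matrix with all diagonal entries equal to −α, all superdiagonal entries equal to −β, and all subdiagonal entries equal to β. Then A is invertible and the entries of the last row of A^{−1} are given by (A^{−1})_{nj} = (r_1^{−j} − r_2^{−j})(r_1^{n+1} r_2^{n} − r_2^{n+1} r_1^{n}) / ( −β (r_1 − r_2)(r_1^{n+1} − r_2^{n+1}) ) for every 1 ≤ j ≤ n (all the powers and the denominator being well defined and nonzero). -/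
/-!
The symmetric part of `A` is `-α • 1`, so `vᵀ A v = -α ‖v‖²` and `A` is invertible. The last row
`x` of `A⁻¹` is the solution of `x A = eₙ`. Away from the last column this system is the
three-term recurrence `-β xₖ₋₁ - α xₖ + β xₖ₊₁ = 0` with `x₀ = 0`, whose characteristic roots are
`r₁⁻¹, r₂⁻¹`; hence `xₖ ∝ r₁⁻ᵏ - r₂⁻ᵏ`, and the last column fixes the constant. Since
`r₁ r₂ = -1`, that constant is the quotient in the statement.
-/

open Matrix

theorem Matrix.isUnit_of_transpose_add_eq_smul_one {ι K : Type*} [Fintype ι] [DecidableEq ι]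
    [Field K] [LinearOrder K] [IsStrictOrderedRing K] {M : Matrix ι ι K} {d : K} (hd : d ≠ 0)
    (h : Mᵀ + M = d • 1) : IsUnit M := by
  rw [isUnit_iff_isUnit_det, isUnit_iff_ne_zero, ne_eq, ← exists_mulVec_eq_zero_iff]
  rintro ⟨v, hv, hMv⟩
  have hquad : v ⬝ᵥ (Mᵀ + M) *ᵥ v = 0 := by
    rw [add_mulVec, dotProduct_add, mulVec_transpose, dotProduct_comm, ← dotProduct_mulVec, hMv]
    simp
  rw [h, smul_mulVec, one_mulVec, dotProduct_smul, smul_eq_mul, mul_eq_zero,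
    dotProduct_self_eq_zero] at hquad
  exact hquad.elim hd hv

theorem Matrix.inv_apply_eq_div_of_vecMul_eq_single {ι K : Type*} [Fintype ι] [DecidableEq ι]
    [Field K] {M : Matrix ι ι K} (hM : IsUnit M.det) {x : ι → K} {i : ι} {μ : K} (hμ : μ ≠ 0)
    (hx : x ᵥ* M = Pi.single i μ) (j : ι) : M⁻¹ i j = x j / μ := by
  have hx' : x = Pi.single i μ ᵥ* M⁻¹ := by
    rw [← hx, vecMul_vecMul, mul_nonsing_inv _ hM, vecMul_one]
  rw [hx', single_vecMul, Pi.smul_apply, row_apply, smul_eq_mul, mul_div_cancel_left₀ _ hμ]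

theorem Fin.sum_ite_val_eq {M : Type*} [AddCommMonoid M] {n : ℕ} (m : ℕ) (f : ℕ → M) :
    (∑ l : Fin n, if (l : ℕ) = m then f l else 0) = if m < n then f m else 0 := by
  rw [Fin.sum_univ_eq_sum_range (fun l => if l = m then f l else 0), Finset.sum_ite_eq']
  simp only [Finset.mem_range]

theorem inv_pow_linear_recurrence {K : Type*} [Field K] {a b c r : K} (hr : r ≠ 0)
    (h : b * r ^ 2 + a * r + c = 0) (m : ℕ) :
    b * (r ^ m)⁻¹ + a * (r ^ (m + 1))⁻¹ + c * (r ^ (m + 2))⁻¹ = 0 := by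
  rw [pow_add, pow_add, pow_one]
  field_simp
  linear_combination h

def tridiagonalToeplitz {K : Type*} [Zero K] (n : ℕ) (a b c : K) : Matrix (Fin n) (Fin n) K :=
  Matrix.of fun i k : Fin n =>
    if (i : ℕ) = (k : ℕ) then a
    else if (k : ℕ) = (i : ℕ) + 1 then b
    else if (i : ℕ) = (k : ℕ) + 1 then c
    else 0

section TridiagonalToeplitz

variable {K : Type*} [Field K] {n : ℕ} {a b c : K}

theorem tridiagonalToeplitz_transpose_add (hcb : c = -b) :
    (tridiagonalToeplitz n a b c)ᵀ + tridiagonalToeplitz n a b c = (2 * a) • 1 := by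
  ext i k
  simp only [tridiagonalToeplitz, Matrix.add_apply, transpose_apply, of_apply, Matrix.smul_apply,
    one_apply, Fin.ext_iff, smul_eq_mul, hcb]
  split_ifs <;> first | omega | ring

theorem vecMul_tridiagonalToeplitz_apply {s : ℕ → K} (hs : s 0 = 0) (k : Fin n) :
    ((fun l : Fin n => s (l + 1)) ᵥ* tridiagonalToeplitz n a b c) k =
      b * s k + a * s (k + 1) + if (k : ℕ) + 1 < n then c * s (k + 2) else 0 := by
  have hterm : ∀ l : Fin n, s (l + 1) * tridiagonalToeplitz n a b c l k =
      (if (l : ℕ) + 1 = k then b * s (l + 1) else 0) + (if (l : ℕ) = k then a * s (l + 1) else 0) +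
        if (l : ℕ) = k + 1 then c * s (l + 1) else 0 := by
    intro l
    simp only [tridiagonalToeplitz, of_apply]
    split_ifs <;> first | omega | ring
  have hsub : (∑ l : Fin n, if (l : ℕ) + 1 = k then b * s (l + 1) else 0) = b * s k := by
    rcases Nat.eq_zero_or_pos (k : ℕ) with hk | hk
    · rw [hk, hs, mul_zero]
      exact Finset.sum_eq_zero fun l _ => if_neg (Nat.succ_ne_zero _)
    · simp only [show ∀ l : ℕ, l + 1 = k ↔ l = k - 1 by omega]
      rw [Fin.sum_ite_val_eq _ (fun l => b * s (l + 1)), if_pos (by omega), Nat.sub_add_cancel hk]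
  simp only [vecMul, dotProduct, hterm, Finset.sum_add_distrib, hsub,
    Fin.sum_ite_val_eq _ (fun l => a * s (l + 1)), Fin.sum_ite_val_eq _ (fun l => c * s (l + 1)),
    k.isLt, if_true]

theorem vecMul_tridiagonalToeplitz_eq_single {s : ℕ → K} (hs : s 0 = 0)
    (hrec : ∀ m, b * s m + a * s (m + 1) + c * s (m + 2) = 0) {i : Fin n} (hi : (i : ℕ) + 1 = n) :
    (fun l : Fin n => s (l + 1)) ᵥ* tridiagonalToeplitz n a b c =
      Pi.single i (-(c * s (n + 1))) := by
  ext k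
  rw [vecMul_tridiagonalToeplitz_apply hs, Pi.single_apply]
  split_ifs with hk hki hki
  · omega
  · exact hrec k
  · have hrec_last := hrec k
    rw [show (k : ℕ) + 2 = n + 1 by omega] at hrec_last
    linear_combination hrec_last
  · exact absurd (Fin.ext (by omega)) hki

theorem tridiagonalToeplitz_inv_apply_of_recurrence {s : ℕ → K} (hs : s 0 = 0)
    (hrec : ∀ m, b * s m + a * s (m + 1) + c * s (m + 2) = 0)
    (hdet : IsUnit (tridiagonalToeplitz n a b c).det) (hsn : c * s (n + 1) ≠ 0)
    {i : Fin n} (hi : (i : ℕ) + 1 = n) (j : Fin n) :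
    (tridiagonalToeplitz n a b c)⁻¹ i j = s (j + 1) / -(c * s (n + 1)) :=
  inv_apply_eq_div_of_vecMul_eq_single hdet (neg_ne_zero.2 hsn)
    (vecMul_tridiagonalToeplitz_eq_single hs hrec hi) j

end TridiagonalToeplitz

section QuadraticFormula

variable {α β r1 r2 : ℝ}

theorem quadratic_formula_isRoot (hβ : β ≠ 0) {r : ℝ}
    (hr : r = (-α + √(α ^ 2 + 4 * β ^ 2)) / (2 * β) ∨ r = (-α - √(α ^ 2 + 4 * β ^ 2)) / (2 * β)) :
    β - r * α - r ^ 2 * β = 0 := by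
  have hroot := (quadratic_eq_zero_iff (a := β) (b := α) (c := -β) hβ
    (s := √(α ^ 2 + 4 * β ^ 2)) (by rw [discrim, Real.mul_self_sqrt (by positivity)]; ring) r).2 hr
  linear_combination -hroot

theorem quadratic_formula_mul (hβ : β ≠ 0)
    (hr1 : r1 = (-α + √(α ^ 2 + 4 * β ^ 2)) / (2 * β))
    (hr2 : r2 = (-α - √(α ^ 2 + 4 * β ^ 2)) / (2 * β)) : r1 * r2 = -1 := by
  have hd : √(α ^ 2 + 4 * β ^ 2) ^ 2 = α ^ 2 + 4 * β ^ 2 := Real.sq_sqrt (by positivity)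
  rw [hr1, hr2]
  field_simp
  linear_combination -hd

theorem quadratic_formula_ne (hβ : β ≠ 0)
    (hr1 : r1 = (-α + √(α ^ 2 + 4 * β ^ 2)) / (2 * β))
    (hr2 : r2 = (-α - √(α ^ 2 + 4 * β ^ 2)) / (2 * β)) : r1 ≠ r2 := by
  have hd : 0 < √(α ^ 2 + 4 * β ^ 2) := Real.sqrt_pos.2 (by positivity)
  rw [hr1, hr2, Ne, div_left_inj' (by simpa using hβ)]
  linarith

theorem quadratic_formula_pow_ne (hα : α ≠ 0) (hβ : β ≠ 0)
    (hr1 : r1 = (-α + √(α ^ 2 + 4 * β ^ 2)) / (2 * β))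
    (hr2 : r2 = (-α - √(α ^ 2 + 4 * β ^ 2)) / (2 * β)) {m : ℕ} (hm : m ≠ 0) :
    r1 ^ m ≠ r2 ^ m := by
  rw [Ne, pow_eq_pow_iff_of_ne_zero hm]
  rintro (h | ⟨h, -⟩)
  · exact quadratic_formula_ne hβ hr1 hr2 h
  · have hsum : r1 + r2 = -α / β := by
      rw [hr1, hr2]
      field_simp
      ring
    rw [h, neg_add_cancel, eq_comm, div_eq_zero_iff, neg_eq_zero] at hsum
    exact hsum.elim hα hβ

end QuadraticFormula

theorem inv_neg_mul_inv_pow_sub_inv_pow {β r1 r2 : ℝ} (hprod : r1 * r2 = -1) (n : ℕ) :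
    (-(β * ((r1 ^ (n + 1))⁻¹ - (r2 ^ (n + 1))⁻¹)))⁻¹ =
      (r1 ^ (n + 1) * r2 ^ n - r2 ^ (n + 1) * r1 ^ n) /
        (-β * (r1 - r2) * (r1 ^ (n + 1) - r2 ^ (n + 1))) := by
  have hpow : ∀ m, r1 ^ m * r2 ^ m = (-1) ^ m := fun m => by rw [← mul_pow, hprod]
  have hsign : ∀ m, ((-1 : ℝ) ^ m) ^ 2 = 1 := fun m => by rw [← pow_mul, pow_mul']; norm_num
  have hinv1 : ∀ m, (r1 ^ m)⁻¹ = (-1) ^ m * r2 ^ m := fun m =>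
    inv_eq_of_mul_eq_one_right (by linear_combination (-1) ^ m * hpow m + hsign m)
  have hinv2 : ∀ m, (r2 ^ m)⁻¹ = (-1) ^ m * r1 ^ m := fun m =>
    inv_eq_of_mul_eq_one_right (by linear_combination (-1) ^ m * hpow m + hsign m)
  have hne : r1 - r2 ≠ 0 := fun h => by
    rw [sub_eq_zero.1 h] at hprod
    nlinarith [mul_self_nonneg r2]
  calc (-(β * ((r1 ^ (n + 1))⁻¹ - (r2 ^ (n + 1))⁻¹)))⁻¹
      = ((-1) ^ n)⁻¹ * (-β * (r1 ^ (n + 1) - r2 ^ (n + 1)))⁻¹ := by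
        rw [hinv1, hinv2, ← mul_inv]
        ring
    _ = (-1) ^ n * (r1 - r2) / (-β * (r1 - r2) * (r1 ^ (n + 1) - r2 ^ (n + 1))) := by
        rw [← inv_pow, inv_neg_one, mul_right_comm _ (r1 - r2), mul_div_mul_right _ _ hne,
          div_eq_mul_inv]
    _ = _ := by
        congr 1
        linear_combination (r2 - r1) * hpow n

/-- (Last row of the inverse of a constant-coefficient tridiagonal matrix.)
Let `α, β > 0`, `n ≥ 1`, and let `r_1 ≠ r_2` be the two (real, distinct) roots of
`β − rα − r²β = 0`, namely `r_{1,2} = (−α ± √(α² + 4β²))/(2β)`.  Let `A` be the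
`n×n` tridiagonal matrix with diagonal entries `−α`, superdiagonal entries `−β`
and subdiagonal entries `β`.  Then `A` is invertible and
`(A⁻¹)_{nj} = (r_1^{−j} − r_2^{−j})(r_1^{n+1} r_2^n − r_2^{n+1} r_1^n) /
(−β (r_1 − r_2)(r_1^{n+1} − r_2^{n+1}))` for every `1 ≤ j ≤ n`
(all the powers and the denominator being well defined and nonzero). -/
theorem stmt18 (n : ℕ) (hn : 1 ≤ n) (α β : ℝ) (hα : 0 < α) (hβ : 0 < β)
    (r1 r2 : ℝ)
    (hr1 : r1 = (-α + Real.sqrt (α ^ 2 + 4 * β ^ 2)) / (2 * β))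
    (hr2 : r2 = (-α - Real.sqrt (α ^ 2 + 4 * β ^ 2)) / (2 * β))
    (A : Matrix (Fin n) (Fin n) ℝ)
    (hA : A = Matrix.of fun i k : Fin n =>
      if (i : ℕ) = (k : ℕ) then -α
      else if (k : ℕ) = (i : ℕ) + 1 then -β
      else if (i : ℕ) = (k : ℕ) + 1 then β
      else 0) :
    (β - r1 * α - r1 ^ 2 * β = 0) ∧
    (β - r2 * α - r2 ^ 2 * β = 0) ∧
    r1 ≠ r2 ∧ r1 ≠ 0 ∧ r2 ≠ 0 ∧
    IsUnit A ∧
    (-β * (r1 - r2) * (r1 ^ (n + 1) - r2 ^ (n + 1)) ≠ 0) ∧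
    ∀ j : Fin n, A⁻¹ ⟨n - 1, by omega⟩ j =
      ((r1 ^ (-(((j : ℕ) + 1 : ℕ) : ℤ)) - r2 ^ (-(((j : ℕ) + 1 : ℕ) : ℤ))) *
        (r1 ^ (n + 1) * r2 ^ n - r2 ^ (n + 1) * r1 ^ n)) /
      (-β * (r1 - r2) * (r1 ^ (n + 1) - r2 ^ (n + 1))) := by
  have hT : A = tridiagonalToeplitz n (-α) (-β) β := hA
  have hprod := quadratic_formula_mul hβ.ne' hr1 hr2
  have hr1' : r1 ≠ 0 := left_ne_zero_of_mul (by rw [hprod]; norm_num)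
  have hr2' : r2 ≠ 0 := right_ne_zero_of_mul (by rw [hprod]; norm_num)
  have hq1 := quadratic_formula_isRoot hβ.ne' (.inl hr1)
  have hq2 := quadratic_formula_isRoot hβ.ne' (.inr hr2)
  have hpow_ne := quadratic_formula_pow_ne hα.ne' hβ.ne' hr1 hr2 n.succ_ne_zero
  have hunit : IsUnit A := hT ▸ isUnit_of_transpose_add_eq_smul_one (by simpa using hα.ne')
    (tridiagonalToeplitz_transpose_add (neg_neg β).symm)
  have hne := quadratic_formula_ne hβ.ne' hr1 hr2
  refine ⟨hq1, hq2, hne, hr1', hr2', hunit,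
    mul_ne_zero (mul_ne_zero (neg_ne_zero.2 hβ.ne') (sub_ne_zero.2 hne)) (sub_ne_zero.2 hpow_ne),
    fun j => ?_⟩
  set s : ℕ → ℝ := fun m => (r1 ^ m)⁻¹ - (r2 ^ m)⁻¹
  have hrec (m : ℕ) : -β * s m + -α * s (m + 1) + β * s (m + 2) = 0 := by
    have hinv_pow (r : ℝ) (hr : r ≠ 0) (hq : β - r * α - r ^ 2 * β = 0) :=
      inv_pow_linear_recurrence (a := -α) (b := -β) (c := β) hr (by linear_combination hq) m
    linear_combination hinv_pow r1 hr1' hq1 - hinv_pow r2 hr2' hq2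
  have hsn : β * s (n + 1) ≠ 0 := mul_ne_zero hβ.ne' (sub_ne_zero.2 (inv_injective.ne hpow_ne))
  rw [hT, tridiagonalToeplitz_inv_apply_of_recurrence (by simp [s]) hrec
    ((isUnit_iff_isUnit_det _).1 (hT ▸ hunit)) hsn (Nat.sub_add_cancel hn) j, _root_.zpow_neg,
    _root_.zpow_neg, zpow_natCast, zpow_natCast, mul_div_assoc,
    ← inv_neg_mul_inv_pow_sub_inv_pow hprod, div_eq_mul_inv]
end

section
/- (Dissipativity estimate ensuring tightness.) Define f_1(x) := a_{10} − a_{11}x_1 − a_{12}x_2, f_i(x) := −a_{i0} + a_{i,i−1}x_{i−1} − a_{ii}x_i − a_{i,i+1}x_{i+1} for 2 ≤ i ≤ n−1, and f_n(x) := −a_{n0} + a_{n,n−1}x_{n−1} − a_{nn}x_n, for x ∈ [0,∞)^n. Let c_1 := 1 and c_i := ∏_{k=2}^{i} a_{k−1,k}/a_{k,k−1} for 2 ≤ i ≤ n. Then there exists γ_b > 0 such that limsup, taken over x ∈ [0,∞)^n as ‖x‖ := max_i |x_i| → ∞, of the quantity [ (∑_{i=1}^n c_i x_i f_i(x)) /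 (1 + ∑_{i=1}^n c_i x_i) − (1/2)(∑_{i,j=1}^n σ_{ij} c_i c_j x_i x_j) / (1 + ∑_{i=1}^n c_i x_i)² + γ_b (1 + ∑_{i=1}^n |f_i(x)|) ] is strictly negative. -/
/-!
With the weights `c_i`, the predator–prey couplings become balanced,
`c_i a_{i,i-1} = c_{i-1} a_{i-1,i}`, so the off-diagonal terms of `∑ c_i x_i f_i(x)` telescope
away and `∑ c_i x_i f_i(x) ≤ a_{10} ‖x‖ - d ‖x‖²` with `d = min_i c_i a_{ii} > 0`. The
denominator `1 + ∑ c_i x_i` is at most `(1 + ∑ c_i) (1 + ‖x‖)`, so the first term is below a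
negative multiple of `‖x‖`; the `σ`-term is nonpositive, and `∑ |f_i(x)|` grows at most
linearly in `‖x‖`, so it is absorbed for `γ_b` small.
-/

/-- The drift coefficients of the food chain:
`f_1(x) = a_{10} − a_{11}x_1 − a_{12}x_2`,
`f_i(x) = −a_{i0} + a_{i,i−1}x_{i−1} − a_{ii}x_i − a_{i,i+1}x_{i+1}` for `2 ≤ i ≤ n−1`,
`f_n(x) = −a_{n0} + a_{n,n−1}x_{n−1} − a_{nn}x_n`. -/
def fdrift (n : ℕ) (a : ℕ → ℕ → ℝ) (a0 : ℕ → ℝ) (i : ℕ) (x : ℕ → ℝ) : ℝ :=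
  if i = 1 then a0 1 - a 1 1 * x 1 - a 1 2 * x 2
  else if i = n then -a0 n + a n (n - 1) * x (n - 1) - a n n * x n
  else -a0 i + a i (i - 1) * x (i - 1) - a i i * x i - a i (i + 1) * x (i + 1)

/-- The weights `c_1 = 1`, `c_i = ∏_{k=2}^{i} a_{k−1,k}/a_{k,k−1}` for `i ≥ 2`. -/
noncomputable def ccoef (a : ℕ → ℕ → ℝ) (i : ℕ) : ℝ :=
  if i = 1 then 1 else ∏ k ∈ Finset.Icc 2 i, a (k - 1) k / a k (k - 1)

open Finset

lemma Finset.inf'_mul_sup'_abs_sq_le_sum {ι : Type*} {s : Finset ι} (hs : s.Nonempty)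
    (w y : ι → ℝ) (hw : ∀ i ∈ s, 0 ≤ w i) :
    s.inf' hs w * (s.sup' hs fun i => |y i|) ^ 2 ≤ ∑ i ∈ s, w i * y i ^ 2 := by
  obtain ⟨i₀, hi₀, hmax⟩ := s.exists_mem_eq_sup' hs fun i => |y i|
  calc s.inf' hs w * (s.sup' hs fun i => |y i|) ^ 2 ≤ w i₀ * y i₀ ^ 2 := by
        rw [hmax, sq_abs]
        exact mul_le_mul_of_nonneg_right (inf'_le w hi₀) (sq_nonneg _)
    _ ≤ ∑ i ∈ s, w i * y i ^ 2 :=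
        single_le_sum (fun i hi => mul_nonneg (hw i hi) (sq_nonneg _)) hi₀

lemma div_le_of_le_sub_mul_sq {S D M A d K : ℝ} (hd : 0 < d) (hK : 0 < K) (hM : 1 ≤ M)
    (hMA : 2 * (A + 2 * K) / d ≤ M) (hS : S ≤ A * M - d * M ^ 2) (hD : 0 < D)
    (hDK : D ≤ K * (1 + M)) :
    S / D ≤ -1 - d / (8 * K) * (1 + M) := by
  have hAM : A + 2 * K ≤ d / 2 * M := by
    rw [div_le_iff₀ hd] at hMA; linarith
  have hneg : -1 - d / (8 * K) * (1 + M) ≤ 0 := by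
    have : 0 ≤ d / (8 * K) * (1 + M) := by positivity
    linarith
  have hexpand : (-1 - d / (8 * K) * (1 + M)) * (K * (1 + M))
      = -(K * (1 + M)) - d / 8 * (1 + M) ^ 2 := by
    field_simp
  rw [div_le_iff₀ hD]
  calc S ≤ A * M - d * M ^ 2 := hS
    _ ≤ -(K * (1 + M)) - d / 8 * (1 + M) ^ 2 := by
        nlinarith [mul_le_mul_of_nonneg_right hAM (by linarith : (0 : ℝ) ≤ M),
          mul_nonneg (mul_nonneg hd.le (sub_nonneg.2 hM)) (by linarith : (0 : ℝ) ≤ 3 * M + 1)]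
    _ ≤ (-1 - d / (8 * K) * (1 + M)) * D := by
        rw [← hexpand]; exact mul_le_mul_of_nonpos_left hDK hneg

lemma sub_div_sq_add_le_neg_one {S D Q F M A d K L : ℝ} (hd : 0 < d) (hK : 0 < K)
    (hL : 0 ≤ L) (hM : 1 ≤ M) (hMA : 2 * (A + 2 * K) / d ≤ M) (hS : S ≤ A * M - d * M ^ 2)
    (hD : 0 < D) (hDK : D ≤ K * (1 + M)) (hQ : 0 ≤ Q) (hF : F ≤ L * (1 + M)) :
    S / D - 1 / 2 * Q / D ^ 2 + d / (8 * K * (1 + L)) * (1 + F) ≤ -1 := by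
  have hSD := div_le_of_le_sub_mul_sq hd hK hM hMA hS hD hDK
  have hγ : d / (8 * K * (1 + L)) * (1 + F) ≤ d / (8 * K) * (1 + M) := by
    calc d / (8 * K * (1 + L)) * (1 + F) ≤ d / (8 * K * (1 + L)) * ((1 + L) * (1 + M)) := by
          gcongr; nlinarith
      _ = d / (8 * K) * (1 + M) := by field_simp
  have hQD : 0 ≤ 1 / 2 * Q / D ^ 2 := by positivity
  linarith

lemma one_add_sum_mul_le {ι : Type*} {s : Finset ι} {c x : ι → ℝ} {M : ℝ} (hM : 0 ≤ M)
    (hc : ∀ i ∈ s, 0 ≤ c i) (hx : ∀ i ∈ s, x i ≤ M) :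
    1 + ∑ i ∈ s, c i * x i ≤ (1 + ∑ i ∈ s, c i) * (1 + M) := by
  have hcx : ∑ i ∈ s, c i * x i ≤ (∑ i ∈ s, c i) * M := by
    rw [sum_mul]
    exact sum_le_sum fun i hi => mul_le_mul_of_nonneg_left (hx i hi) (hc i hi)
  nlinarith [sum_nonneg hc]

section FoodChain

variable {n : ℕ} {a : ℕ → ℕ → ℝ} {a0 : ℕ → ℝ}

lemma ccoef_pos (ha_sub : ∀ i, 2 ≤ i → i ≤ n → 0 < a i (i - 1))
    (ha_sup : ∀ i, 1 ≤ i → i ≤ n - 1 → 0 < a i (i + 1)) {i : ℕ} (hi : i ≤ n) :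
    0 < ccoef a i := by
  unfold ccoef
  split_ifs
  · exact one_pos
  · refine prod_pos fun k hk => ?_
    rw [mem_Icc] at hk
    have hsup := ha_sup (k - 1) (by omega) (by omega)
    rw [Nat.sub_add_cancel (by omega)] at hsup
    exact div_pos hsup (ha_sub k hk.1 (by omega))

lemma ccoef_mul_subdiag (a : ℕ → ℕ → ℝ) {i : ℕ} (hi : 2 ≤ i) (ha : a i (i - 1) ≠ 0) :
    ccoef a i * a i (i - 1) = ccoef a (i - 1) * a (i - 1) i := by
  obtain ⟨m, rfl⟩ : ∃ m, i = m + 2 := ⟨i - 2, by omega⟩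
  have hprev : ccoef a (m + 1) = ∏ k ∈ Icc 2 (m + 1), a (k - 1) k / a k (k - 1) := by
    rcases m with _ | m <;> simp [ccoef]
  rw [show m + 2 - 1 = m + 1 from rfl, hprev, ccoef, if_neg (by omega),
    prod_Icc_succ_top (by omega), Nat.add_sub_cancel, mul_assoc]
  exact congrArg _ (div_mul_cancel₀ _ ha)

/-- The weighted exchange between species `i - 1` and `i`; it enters `c_{i-1} x_{i-1} f_{i-1}`
and `c_i x_i f_i` with opposite signs. -/
noncomputable def chainFlux (n : ℕ) (a : ℕ → ℕ → ℝ) (x : ℕ → ℝ) (i : ℕ) : ℝ :=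
  if 2 ≤ i ∧ i ≤ n then ccoef a (i - 1) * a (i - 1) i * x (i - 1) * x i else 0

lemma ccoef_mul_fdrift (hn : 2 ≤ n) (ha_sub : ∀ i, 2 ≤ i → i ≤ n → a i (i - 1) ≠ 0)
    (x : ℕ → ℝ) {i : ℕ} (h1 : 1 ≤ i) (hi : i ≤ n) :
    ccoef a i * x i * fdrift n a a0 i x
      = (if i = 1 then a0 1 * x 1 else -(ccoef a i * a0 i * x i)) - ccoef a i * a i i * x i ^ 2
        + (chainFlux n a x i - chainFlux n a x (i + 1)) := by
  have hflux : chainFlux n a x (i + 1) =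
      if i + 1 ≤ n then ccoef a i * a i (i + 1) * x i * x (i + 1) else 0 := by
    simp only [chainFlux, Nat.add_sub_cancel]
    congr 1
    simp only [eq_iff_iff, and_iff_right_iff_imp]
    omega
  rw [hflux, chainFlux]
  by_cases h1 : i = 1
  · subst h1
    simp only [fdrift, ccoef, ↓reduceIte, Nat.not_ofNat_le_one, false_and, hn,
      show (1 : ℕ) + 1 = 2 from rfl]
    ring
  · have hbal := ccoef_mul_subdiag a (by omega : 2 ≤ i) (ha_sub i (by omega) hi)
    by_cases hin : i = n
    · subst hin
      simp only [fdrift, if_neg h1, if_pos trivial, if_pos (show 2 ≤ i ∧ i ≤ i by omega),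
        if_neg (show ¬ i + 1 ≤ i by omega)]
      linear_combination hbal * (x (i - 1) * x i)
    · simp only [fdrift, if_neg h1, if_neg hin, if_pos (show 2 ≤ i ∧ i ≤ n by omega),
        if_pos (show i + 1 ≤ n by omega)]
      linear_combination hbal * (x (i - 1) * x i)

lemma sum_ccoef_mul_fdrift (hn : 2 ≤ n) (ha_sub : ∀ i, 2 ≤ i → i ≤ n → a i (i - 1) ≠ 0)
    (x : ℕ → ℝ) :
    ∑ i ∈ Icc 1 n, ccoef a i * x i * fdrift n a a0 i x
      = ∑ i ∈ Icc 1 n, ((if i = 1 then a0 1 * x 1 else -(ccoef a i * a0 i * x i))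
          - ccoef a i * a i i * x i ^ 2) := by
  have htel : ∑ i ∈ Icc 1 n, (chainFlux n a x i - chainFlux n a x (i + 1)) = 0 := by
    have h := sum_Icc_sub (show 1 ≤ n by omega) fun i => -chainFlux n a x i
    simp only [sub_neg_eq_add, neg_add_eq_sub] at h
    rw [h, chainFlux, chainFlux, if_neg (by omega), if_neg (by omega), sub_self]
  rw [sum_congr rfl fun i hi => ccoef_mul_fdrift hn ha_sub x (mem_Icc.1 hi).1 (mem_Icc.1 hi).2,
    sum_add_distrib, htel, add_zero]

lemma sum_ccoef_mul_fdrift_le (hn : 2 ≤ n) (ha0 : ∀ i, 1 ≤ i → i ≤ n → 0 < a0 i)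
    (ha_diag : ∀ i, 1 ≤ i → i ≤ n → 0 < a i i)
    (ha_sub : ∀ i, 2 ≤ i → i ≤ n → 0 < a i (i - 1))
    (ha_sup : ∀ i, 1 ≤ i → i ≤ n - 1 → 0 < a i (i + 1))
    (hne : (Icc 1 n).Nonempty) (x : ℕ → ℝ) (hx : ∀ i, 1 ≤ i → i ≤ n → 0 ≤ x i) :
    ∑ i ∈ Icc 1 n, ccoef a i * x i * fdrift n a a0 i x
      ≤ a0 1 * (Icc 1 n).sup' hne (fun i => |x i|)
        - (Icc 1 n).inf' hne (fun i => ccoef a i * a i i)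
          * (Icc 1 n).sup' hne (fun i => |x i|) ^ 2 := by
  have hc := fun i (hi : i ∈ Icc 1 n) => ccoef_pos ha_sub ha_sup (mem_Icc.1 hi).2
  have hsource : ∑ i ∈ Icc 1 n, (if i = 1 then a0 1 * x 1 else -(ccoef a i * a0 i * x i))
      ≤ a0 1 * (Icc 1 n).sup' hne (fun i => |x i|) := by
    have h1 : (1 : ℕ) ∈ Icc 1 n := mem_Icc.2 ⟨le_rfl, by omega⟩
    calc _ ≤ ∑ i ∈ Icc 1 n, (if i = 1 then a0 1 * x 1 else 0) := by
          refine sum_le_sum fun i hi => ?_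
          split_ifs
          · exact le_rfl
          · rw [mem_Icc] at hi
            have := mul_nonneg (mul_nonneg (hc i (mem_Icc.2 hi)).le (ha0 i hi.1 hi.2).le)
              (hx i hi.1 hi.2)
            linarith
      _ = a0 1 * |x 1| := by
          rw [sum_ite_eq', if_pos h1, abs_of_nonneg (hx 1 le_rfl (by omega))]
      _ ≤ _ := mul_le_mul_of_nonneg_left (le_sup' (fun i => |x i|) h1) (ha0 1 le_rfl (by omega)).le
  have hdiag := inf'_mul_sup'_abs_sq_le_sum hne (fun i => ccoef a i * a i i) x
    fun i hi => (mul_pos (hc i hi) (ha_diag i (mem_Icc.1 hi).1 (mem_Icc.1 hi).2)).le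
  rw [sum_ccoef_mul_fdrift hn (fun i h2 hi => (ha_sub i h2 hi).ne') x, sum_sub_distrib]
  linarith

lemma abs_fdrift_le (hn : 2 ≤ n) (x : ℕ → ℝ) {M : ℝ} (hM : ∀ j ∈ Icc 1 n, |x j| ≤ M) {i : ℕ}
    (hi : i ∈ Icc 1 n) :
    |fdrift n a a0 i x| ≤ (|a0 i| + |a i (i - 1)| + |a i i| + |a i (i + 1)|) * (1 + M) := by
  have hM0 : 0 ≤ M := (abs_nonneg _).trans (hM i hi)
  have hterm : ∀ q : ℝ, ∀ j, 1 ≤ j → j ≤ n → |q * x j| ≤ |q| * (1 + M) := fun q j h1 h2 => by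
    rw [abs_mul]; gcongr; linarith [hM j (mem_Icc.2 ⟨h1, h2⟩)]
  have hconst : ∀ q : ℝ, |q| ≤ |q| * (1 + M) := fun q =>
    le_mul_of_one_le_right (abs_nonneg q) (by linarith)
  have hnonneg : ∀ q : ℝ, 0 ≤ |q| * (1 + M) := fun q => by positivity
  rw [mem_Icc] at hi
  unfold fdrift
  split_ifs with h1 hin
  · subst h1
    linarith [abs_sub (a0 1 - a 1 1 * x 1) (a 1 2 * x 2), abs_sub (a0 1) (a 1 1 * x 1),
      hterm (a 1 1) 1 le_rfl (by omega), hterm (a 1 2) 2 (by omega) hn, hconst (a0 1),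
      hnonneg (a 1 0)]
  · subst hin
    linarith [abs_sub (-a0 i + a i (i - 1) * x (i - 1)) (a i i * x i),
      abs_add_le (-a0 i) (a i (i - 1) * x (i - 1)), abs_neg (a0 i),
      hterm (a i (i - 1)) (i - 1) (by omega) (by omega), hterm (a i i) i hi.1 le_rfl,
      hconst (a0 i), hnonneg (a i (i + 1))]
  · linarith [abs_sub (-a0 i + a i (i - 1) * x (i - 1) - a i i * x i) (a i (i + 1) * x (i + 1)),
      abs_sub (-a0 i + a i (i - 1) * x (i - 1)) (a i i * x i),
      abs_add_le (-a0 i) (a i (i - 1) * x (i - 1)), abs_neg (a0 i),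
      hterm (a i (i - 1)) (i - 1) (by omega) (by omega), hterm (a i i) i hi.1 hi.2,
      hterm (a i (i + 1)) (i + 1) (by omega) (by omega), hconst (a0 i)]

end FoodChain

/-- (Dissipativity estimate ensuring tightness.)  There exists `γ_b > 0` such that
the limsup, over `x ∈ [0,∞)^n` as `‖x‖ = max_i |x_i| → ∞`, of
`(∑ c_i x_i f_i(x))/(1 + ∑ c_i x_i) − (1/2)(∑_{i,j} σ_{ij} c_i c_j x_i x_j)/(1 + ∑ c_i x_i)²
+ γ_b (1 + ∑ |f_i(x)|)` is strictly negative; i.e. there are `γ_b > 0`, `ε > 0` and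
a radius `R` such that the bracket is `≤ −ε` for every `x ∈ [0,∞)^n` with `‖x‖ ≥ R`. -/
theorem stmt19 (n : ℕ) (hn : 2 ≤ n) (a : ℕ → ℕ → ℝ) (a0 : ℕ → ℝ)
    (ha0 : ∀ i, 1 ≤ i → i ≤ n → 0 < a0 i)
    (ha_diag : ∀ i, 1 ≤ i → i ≤ n → 0 < a i i)
    (ha_sub : ∀ i, 2 ≤ i → i ≤ n → 0 < a i (i - 1))
    (ha_sup : ∀ i, 1 ≤ i → i ≤ n - 1 → 0 < a i (i + 1))
    (σ : ℕ → ℕ → ℝ)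
    (hσpsd : ∀ v : ℕ → ℝ,
      0 ≤ ∑ i ∈ Finset.Icc 1 n, ∑ j ∈ Finset.Icc 1 n, σ i j * v i * v j) :
    ∃ γb > (0 : ℝ), ∃ ε > (0 : ℝ), ∃ R : ℝ, ∀ x : ℕ → ℝ,
      (∀ i, 1 ≤ i → i ≤ n → 0 ≤ x i) →
      R ≤ (Finset.Icc 1 n).sup' (Finset.nonempty_Icc.mpr (by omega)) (fun i => |x i|) →
      (∑ i ∈ Finset.Icc 1 n, ccoef a i * x i * fdrift n a a0 i x) /
          (1 + ∑ i ∈ Finset.Icc 1 n, ccoef a i * x i)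
        - (1 / 2) * (∑ i ∈ Finset.Icc 1 n, ∑ j ∈ Finset.Icc 1 n,
            σ i j * ccoef a i * ccoef a j * x i * x j) /
          (1 + ∑ i ∈ Finset.Icc 1 n, ccoef a i * x i) ^ 2
        + γb * (1 + ∑ i ∈ Finset.Icc 1 n, |fdrift n a a0 i x|)
      ≤ -ε := by
  have hne : (Icc 1 n).Nonempty := nonempty_Icc.mpr (by omega)
  have hc : ∀ i ∈ Icc 1 n, 0 < ccoef a i := fun i hi => ccoef_pos ha_sub ha_sup (mem_Icc.1 hi).2
  set d := (Icc 1 n).inf' hne fun i => ccoef a i * a i i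
  set K := 1 + ∑ i ∈ Icc 1 n, ccoef a i
  set L := ∑ i ∈ Icc 1 n, (|a0 i| + |a i (i - 1)| + |a i i| + |a i (i + 1)|)
  have hd : 0 < d := (lt_inf'_iff hne).2 fun i hi =>
    mul_pos (hc i hi) (ha_diag i (mem_Icc.1 hi).1 (mem_Icc.1 hi).2)
  have hK : 0 < K := by linarith [sum_nonneg fun i hi => (hc i hi).le]
  have hL : 0 ≤ L := by positivity
  refine ⟨d / (8 * K * (1 + L)), by positivity, 1, one_pos, max 1 (2 * (a0 1 + 2 * K) / d),
    fun x hx hR => ?_⟩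
  set M := (Icc 1 n).sup' hne fun i => |x i|
  have hxM : ∀ i ∈ Icc 1 n, |x i| ≤ M := fun i hi => le_sup' (fun i => |x i|) hi
  have hM : 1 ≤ M := le_of_max_le_left hR
  have hcx : 0 ≤ ∑ i ∈ Icc 1 n, ccoef a i * x i := sum_nonneg fun i hi =>
    mul_nonneg (hc i hi).le (hx i (mem_Icc.1 hi).1 (mem_Icc.1 hi).2)
  refine sub_div_sq_add_le_neg_one hd hK hL hM (le_of_max_le_right hR)
    (sum_ccoef_mul_fdrift_le hn ha0 ha_diag ha_sub ha_sup hne x hx) (by linarith)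
    (one_add_sum_mul_le (by linarith) (fun i hi => (hc i hi).le)
      fun i hi => (le_abs_self _).trans (hxM i hi)) ?_ ?_
  · exact (hσpsd fun i => ccoef a i * x i).trans_eq
      (sum_congr rfl fun i _ => sum_congr rfl fun j _ => by ring)
  · rw [sum_mul]
    exact sum_le_sum fun i hi => abs_fdrift_le hn x hxM hi
end
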